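/- arXiv:1905.10176 — 3 statements merged into one kernel-verified Lean document; each statement's English description precedes it below -/
import Mathlib

section
/- (Lemma: orthogonality of the re-weighted DRIV loss under well-specification.) Fix bounded measurable direction functions μ, ν_pre, ν_p, ν_q, ν_r, ν_β of X. Writing θ_s = θ0 + s·ν_pre, p_s = p0 + s·ν_p, q_s = q0 + s·ν_q, r_s = r0 + s·ν_r, β_s = β0 + s·ν_β, define for (s,t) ∈ ℝ² the re-weighted loss L_rw(s,t) = E[( (Y − q_s(X))·(Z − r_s(X)) − θ_s(X)·((T − p_s(X))·(Z − r_s(X)) − β_s(X)) − (θ0 + t·μ)(X)·β_s(X) )²], where the final-stage model is evaluated at the true effect θ0 (well-specification). Then L_rw is a polynomial in (s,t) and its mixed partial derivative ∂²L_rw/∂s∂t at (0,0) equals 0. -/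
open MeasureTheory


namespace Stmt13Aux

variable {Ω : Type*} {m0 : MeasurableSpace Ω} {μ : Measure Ω}

def Bdd (f : Ω → ℝ) : Prop := ∃ C, ∀ ω, |f ω| ≤ C

lemma Bdd.add {f g : Ω → ℝ} (hf : Bdd f) (hg : Bdd g) : Bdd fun ω => f ω + g ω := by
  obtain ⟨C, hC⟩ := hf; obtain ⟨D, hD⟩ := hg
  exact ⟨C + D, fun ω => (abs_add_le _ _).trans (add_le_add (hC ω) (hD ω))⟩

lemma Bdd.sub {f g : Ω → ℝ} (hf : Bdd f) (hg : Bdd g) : Bdd fun ω => f ω - g ω := by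
  obtain ⟨C, hC⟩ := hf; obtain ⟨D, hD⟩ := hg
  exact ⟨C + D, fun ω => (abs_sub _ _).trans (add_le_add (hC ω) (hD ω))⟩

lemma Bdd.mul {f g : Ω → ℝ} (hf : Bdd f) (hg : Bdd g) : Bdd fun ω => f ω * g ω := by
  obtain ⟨C, hC⟩ := hf; obtain ⟨D, hD⟩ := hg
  refine ⟨C * D, fun ω => ?_⟩
  rw [abs_mul]
  exact mul_le_mul (hC ω) (hD ω) (abs_nonneg _) ((abs_nonneg _).trans (hC ω))

lemma Bdd.neg {f : Ω → ℝ} (hf : Bdd f) : Bdd fun ω => -f ω := by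
  obtain ⟨C, hC⟩ := hf; exact ⟨C, fun ω => by simpa using hC ω⟩

lemma Bdd.const (c : ℝ) : Bdd fun _ : Ω => c := ⟨|c|, fun _ => le_rfl⟩

lemma Bdd.integrable [IsFiniteMeasure μ] {f : Ω → ℝ} (hm : AEStronglyMeasurable f μ)
    (hf : Bdd f) : Integrable f μ := by
  obtain ⟨C, hC⟩ := hf
  exact (integrable_const C).mono' hm (ae_of_all _ fun ω => by simpa [Real.norm_eq_abs] using hC ω)

lemma integral_mul_eq_zero [IsProbabilityMeasure μ] {m : MeasurableSpace Ω} (hm : m ≤ m0)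
    {f g : Ω → ℝ} (hf : StronglyMeasurable[m] f) (hfb : Bdd f)
    (hg : Integrable g μ) (hgc : μ[g|m] =ᵐ[μ] 0) : ∫ ω, f ω * g ω ∂μ = 0 := by
  obtain ⟨C, hC⟩ := hfb
  have hint : Integrable (fun ω => f ω * g ω) μ :=
    hg.bdd_mul (c := C) (hf.mono hm).aestronglyMeasurable (ae_of_all _ fun ω => by simpa [Real.norm_eq_abs] using hC ω)
  have h1 : μ[fun ω => f ω * g ω|m] =ᵐ[μ] fun ω => f ω * (μ[g|m]) ω :=
    condExp_mul_of_stronglyMeasurable_left hf hint hg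
  have h2 : (fun ω => f ω * (μ[g|m]) ω) =ᵐ[μ] (fun _ => (0:ℝ)) :=
    hgc.mono fun ω h => by simp [h]
  calc ∫ ω, f ω * g ω ∂μ = ∫ ω, (μ[fun ω => f ω * g ω|m]) ω ∂μ := (integral_condExp hm).symm
    _ = ∫ ω, (0:ℝ) ∂μ := integral_congr_ae (h1.trans h2)
    _ = 0 := integral_zero _ _

lemma condexp_resid_zero [IsProbabilityMeasure μ] {m : MeasurableSpace Ω} (hm : m ≤ m0)
    {f g : Ω → ℝ} (hfi : Integrable f μ) (hgm : StronglyMeasurable[m] g) (hgi : Integrable g μ)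
    (h : g =ᵐ[μ] μ[f|m]) : μ[fun ω => f ω - g ω|m] =ᵐ[μ] 0 := by
  have h1 : μ[fun ω => f ω - g ω|m] =ᵐ[μ] μ[f|m] - μ[g|m] := condExp_sub hfi hgi _
  have h2 : μ[g|m] = g := condExp_of_stronglyMeasurable hm hgm hgi
  filter_upwards [h1, h] with ω h1 h2'
  simp [h1, h2, ← h2']

lemma split [IsProbabilityMeasure μ] (g : Fin 6 → Ω → ℝ) (hgm : ∀ i, Measurable (g i))
    (hgb : ∀ i, Bdd (g i)) (m : Fin 6 → ℝ) :
    ∫ ω, (∑ i, m i * g i ω) ^ 2 ∂μ = ∑ i, ∑ j, (m i * m j) * ∫ ω, g i ω * g j ω ∂μ := by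
  have hint : ∀ i j : Fin 6, Integrable (fun ω => g i ω * g j ω) μ := fun i j =>
    ((hgb i).mul (hgb j)).integrable ((hgm i).mul (hgm j)).aestronglyMeasurable
  have h1 : (fun ω => (∑ i, m i * g i ω) ^ 2)
      = fun ω => ∑ i, ∑ j, (m i * m j) * (g i ω * g j ω) := by
    funext ω
    rw [sq, Finset.sum_mul_sum]
    exact Finset.sum_congr rfl fun i _ => Finset.sum_congr rfl fun j _ => mul_mul_mul_comm _ _ _ _
  rw [h1, integral_finset_sum _ fun i _ =>
    integrable_finset_sum _ fun j _ => (hint i j).const_mul _]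
  refine Finset.sum_congr rfl fun i _ => ?_
  rw [integral_finset_sum _ fun j _ => (hint i j).const_mul _]
  exact Finset.sum_congr rfl fun j _ => integral_const_mul _ _

lemma deriv_quad (a b c : ℝ) : deriv (fun t : ℝ => a + t * b + t ^ 2 * c) 0 = b := by
  have h : HasDerivAt (fun t : ℝ => a + t * b + t ^ 2 * c)
      (0 + 1 * b + (↑2 * (0:ℝ) ^ 1) * c) 0 :=
    (((hasDerivAt_const (0:ℝ) a).add ((hasDerivAt_id (0:ℝ)).mul_const b)).add
      ((hasDerivAt_pow 2 (0:ℝ)).mul_const c))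
  simpa using h.deriv

lemma deriv_quartic (a b c d e : ℝ) :
    deriv (fun s : ℝ => a + s * b + s ^ 2 * c + s ^ 3 * d + s ^ 4 * e) 0 = b := by
  have h : HasDerivAt (fun s : ℝ => a + s * b + s ^ 2 * c + s ^ 3 * d + s ^ 4 * e)
      (0 + 1 * b + (↑2 * (0:ℝ) ^ 1) * c + (↑3 * (0:ℝ) ^ 2) * d + (↑4 * (0:ℝ) ^ 3) * e) 0 :=
    ((((hasDerivAt_const (0:ℝ) a).add ((hasDerivAt_id (0:ℝ)).mul_const b)).add
      ((hasDerivAt_pow 2 (0:ℝ)).mul_const c)).add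
      ((hasDerivAt_pow 3 (0:ℝ)).mul_const d)).add ((hasDerivAt_pow 4 (0:ℝ)).mul_const e)
  simpa using h.deriv

lemma split6 [IsProbabilityMeasure μ] (g0 g1 g2 g3 g4 g5 : Ω → ℝ)
    (hm0 : Measurable g0) (hm1 : Measurable g1) (hm2 : Measurable g2)
    (hm3 : Measurable g3) (hm4 : Measurable g4) (hm5 : Measurable g5)
    (hb0 : Bdd g0) (hb1 : Bdd g1) (hb2 : Bdd g2)
    (hb3 : Bdd g3) (hb4 : Bdd g4) (hb5 : Bdd g5)
    (m0 m1 m2 m3 m4 m5 : ℝ) :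
    ∫ ω, (m0 * g0 ω + m1 * g1 ω + m2 * g2 ω + m3 * g3 ω + m4 * g4 ω + m5 * g5 ω) ^ 2 ∂μ
    =
      m0 * m0 * ∫ ω, g0 ω * g0 ω ∂μ
      + m0 * m1 * ∫ ω, g0 ω * g1 ω ∂μ
      + m0 * m2 * ∫ ω, g0 ω * g2 ω ∂μ
      + m0 * m3 * ∫ ω, g0 ω * g3 ω ∂μ
      + m0 * m4 * ∫ ω, g0 ω * g4 ω ∂μ
      + m0 * m5 * ∫ ω, g0 ω * g5 ω ∂μ
      + m1 * m0 * ∫ ω, g1 ω * g0 ω ∂μ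
      + m1 * m1 * ∫ ω, g1 ω * g1 ω ∂μ
      + m1 * m2 * ∫ ω, g1 ω * g2 ω ∂μ
      + m1 * m3 * ∫ ω, g1 ω * g3 ω ∂μ
      + m1 * m4 * ∫ ω, g1 ω * g4 ω ∂μ
      + m1 * m5 * ∫ ω, g1 ω * g5 ω ∂μ
      + m2 * m0 * ∫ ω, g2 ω * g0 ω ∂μ
      + m2 * m1 * ∫ ω, g2 ω * g1 ω ∂μ
      + m2 * m2 * ∫ ω, g2 ω * g2 ω ∂μ
      + m2 * m3 * ∫ ω, g2 ω * g3 ω ∂μ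
      + m2 * m4 * ∫ ω, g2 ω * g4 ω ∂μ
      + m2 * m5 * ∫ ω, g2 ω * g5 ω ∂μ
      + m3 * m0 * ∫ ω, g3 ω * g0 ω ∂μ
      + m3 * m1 * ∫ ω, g3 ω * g1 ω ∂μ
      + m3 * m2 * ∫ ω, g3 ω * g2 ω ∂μ
      + m3 * m3 * ∫ ω, g3 ω * g3 ω ∂μ
      + m3 * m4 * ∫ ω, g3 ω * g4 ω ∂μ
      + m3 * m5 * ∫ ω, g3 ω * g5 ω ∂μ
      + m4 * m0 * ∫ ω, g4 ω * g0 ω ∂μ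
      + m4 * m1 * ∫ ω, g4 ω * g1 ω ∂μ
      + m4 * m2 * ∫ ω, g4 ω * g2 ω ∂μ
      + m4 * m3 * ∫ ω, g4 ω * g3 ω ∂μ
      + m4 * m4 * ∫ ω, g4 ω * g4 ω ∂μ
      + m4 * m5 * ∫ ω, g4 ω * g5 ω ∂μ
      + m5 * m0 * ∫ ω, g5 ω * g0 ω ∂μ
      + m5 * m1 * ∫ ω, g5 ω * g1 ω ∂μ
      + m5 * m2 * ∫ ω, g5 ω * g2 ω ∂μ
      + m5 * m3 * ∫ ω, g5 ω * g3 ω ∂μ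
      + m5 * m4 * ∫ ω, g5 ω * g4 ω ∂μ
      + m5 * m5 * ∫ ω, g5 ω * g5 ω ∂μ
    := by
  rw [show (fun ω => (m0 * g0 ω + m1 * g1 ω + m2 * g2 ω + m3 * g3 ω + m4 * g4 ω + m5 * g5 ω) ^ 2)
      = fun ω => (∑ i, ![m0, m1, m2, m3, m4, m5] i * ![g0, g1, g2, g3, g4, g5] i ω) ^ 2 from
    funext fun ω => by simp [Fin.sum_univ_succ]; ring]
  rw [split ![g0, g1, g2, g3, g4, g5] (by intro i; fin_cases i <;> assumption)
    (by intro i; fin_cases i <;> assumption) ![m0, m1, m2, m3, m4, m5]]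
  simp [Fin.sum_univ_succ]
  ring

end Stmt13Aux

open Stmt13Aux in
theorem stmt_13
    {Ω 𝓧 : Type*} [MeasurableSpace Ω] [MeasurableSpace 𝓧] [StandardBorelSpace 𝓧]
    (μ : Measure Ω) [IsProbabilityMeasure μ]
    (Y T Z : Ω → ℝ) (X : Ω → 𝓧)
    (hY : Measurable Y) (hT : Measurable T) (hZ : Measurable Z) (hX : Measurable X)
    (hYbdd : ∃ C, ∀ ω, |Y ω| ≤ C) (hTbdd : ∃ C, ∀ ω, |T ω| ≤ C)
    (hZbdd : ∃ C, ∀ ω, |Z ω| ≤ C)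
    (θ0 f0 : 𝓧 → ℝ) (hθ0m : Measurable θ0) (hf0m : Measurable f0)
    (hθ0bdd : ∃ C, ∀ x, |θ0 x| ≤ C) (hf0bdd : ∃ C, ∀ x, |f0 x| ≤ C)
    (hIV : μ[fun ω => Y ω - θ0 (X ω) * T ω - f0 (X ω) |
        MeasurableSpace.comap (fun ω => (Z ω, X ω)) inferInstance] =ᵐ[μ] 0)
    (q0 p0 r0 : 𝓧 → ℝ) (hq0m : Measurable q0) (hp0m : Measurable p0) (hr0m : Measurable r0)
    (hq0bdd : ∃ C, ∀ x, |q0 x| ≤ C) (hp0bdd : ∃ C, ∀ x, |p0 x| ≤ C)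
    (hr0bdd : ∃ C, ∀ x, |r0 x| ≤ C)
    (hq0 : (fun ω => q0 (X ω)) =ᵐ[μ] μ[Y | MeasurableSpace.comap X inferInstance])
    (hp0 : (fun ω => p0 (X ω)) =ᵐ[μ] μ[T | MeasurableSpace.comap X inferInstance])
    (hr0 : (fun ω => r0 (X ω)) =ᵐ[μ] μ[Z | MeasurableSpace.comap X inferInstance])
    (h0 : ℝ × 𝓧 → ℝ) (hh0m : Measurable h0) (hh0bdd : ∃ C, ∀ zx, |h0 zx| ≤ C)
    (hh0 : (fun ω => h0 (Z ω, X ω)) =ᵐ[μ]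
        μ[T | MeasurableSpace.comap (fun ω => (Z ω, X ω)) inferInstance])
    (β0 : 𝓧 → ℝ) (hβ0m : Measurable β0) (hβ0bdd : ∃ C, ∀ x, |β0 x| ≤ C)
    (hβ0 : (fun ω => β0 (X ω)) =ᵐ[μ]
        μ[fun ω => (T ω - p0 (X ω)) * (Z ω - r0 (X ω)) | MeasurableSpace.comap X inferInstance])
    (V0 : 𝓧 → ℝ) (hV0m : Measurable V0) (hV0bdd : ∃ C, ∀ x, |V0 x| ≤ C)
    (hV0 : (fun ω => V0 (X ω)) =ᵐ[μ]
        μ[fun ω => (h0 (Z ω, X ω) - p0 (X ω)) ^ 2 | MeasurableSpace.comap X inferInstance])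
    (μf νpre νp νq νr νβ : 𝓧 → ℝ)
    (hμfm : Measurable μf) (hνprem : Measurable νpre) (hνpm : Measurable νp)
    (hνqm : Measurable νq) (hνrm : Measurable νr) (hνβm : Measurable νβ)
    (hμfbdd : ∃ C, ∀ x, |μf x| ≤ C) (hνprebdd : ∃ C, ∀ x, |νpre x| ≤ C)
    (hνpbdd : ∃ C, ∀ x, |νp x| ≤ C) (hνqbdd : ∃ C, ∀ x, |νq x| ≤ C)
    (hνrbdd : ∃ C, ∀ x, |νr x| ≤ C) (hνβbdd : ∃ C, ∀ x, |νβ x| ≤ C) :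
    ContDiff ℝ (⊤ : ℕ∞) (fun st : ℝ × ℝ => ∫ ω, ((Y ω - (q0 (X ω) + st.1 * νq (X ω))) * (Z ω - (r0 (X ω) + st.1 * νr (X ω)))
        - (θ0 (X ω) + st.1 * νpre (X ω))
          * ((T ω - (p0 (X ω) + st.1 * νp (X ω))) * (Z ω - (r0 (X ω) + st.1 * νr (X ω)))
              - (β0 (X ω) + st.1 * νβ (X ω)))
        - (θ0 (X ω) + st.2 * μf (X ω)) * (β0 (X ω) + st.1 * νβ (X ω))) ^ 2 ∂μ)
    ∧ deriv (fun s : ℝ => deriv (fun t : ℝ => ∫ ω, ((Y ω - (q0 (X ω) + s * νq (X ω))) * (Z ω - (r0 (X ω) + s * νr (X ω)))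
        - (θ0 (X ω) + s * νpre (X ω))
          * ((T ω - (p0 (X ω) + s * νp (X ω))) * (Z ω - (r0 (X ω) + s * νr (X ω)))
              - (β0 (X ω) + s * νβ (X ω)))
        - (θ0 (X ω) + t * μf (X ω)) * (β0 (X ω) + s * νβ (X ω))) ^ 2 ∂μ) 0) 0 = 0 := by
  classical
  have hmXle : (MeasurableSpace.comap X inferInstance) ≤ ‹MeasurableSpace Ω› := hX.comap_le
  have hmZXle : (MeasurableSpace.comap (fun ω => (Z ω, X ω)) inferInstance) ≤ ‹MeasurableSpace Ω› := (hZ.prodMk hX).comap_le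
  have hXmX : Measurable[(MeasurableSpace.comap X inferInstance)] X := measurable_iff_comap_le.mpr le_rfl
  have hZXm : Measurable[(MeasurableSpace.comap (fun ω => (Z ω, X ω)) inferInstance)] (fun ω => (Z ω, X ω)) := measurable_iff_comap_le.mpr le_rfl
  have hle : (MeasurableSpace.comap X inferInstance) ≤ (MeasurableSpace.comap (fun ω => (Z ω, X ω)) inferInstance) := by
    conv_lhs => rw [show X = Prod.snd ∘ (fun ω => (Z ω, X ω)) from rfl,
      ← MeasurableSpace.comap_comp]
    exact MeasurableSpace.comap_mono measurable_snd.comap_le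
  have compB : ∀ φ : 𝓧 → ℝ, (∃ C, ∀ x, |φ x| ≤ C) → Stmt13Aux.Bdd fun ω => φ (X ω) :=
    fun φ h => h.elim fun C hC => ⟨C, fun ω => hC _⟩
  have bY : Stmt13Aux.Bdd Y := hYbdd
  have bT : Stmt13Aux.Bdd T := hTbdd
  have bZ : Stmt13Aux.Bdd Z := hZbdd
  have bq0 : Stmt13Aux.Bdd fun ω => q0 (X ω) := compB q0 hq0bdd
  have bp0 : Stmt13Aux.Bdd fun ω => p0 (X ω) := compB p0 hp0bdd
  have br0 : Stmt13Aux.Bdd fun ω => r0 (X ω) := compB r0 hr0bdd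
  have bθ0 : Stmt13Aux.Bdd fun ω => θ0 (X ω) := compB θ0 hθ0bdd
  have bβ0 : Stmt13Aux.Bdd fun ω => β0 (X ω) := compB β0 hβ0bdd
  have bμf : Stmt13Aux.Bdd fun ω => μf (X ω) := compB μf hμfbdd
  have bνpre : Stmt13Aux.Bdd fun ω => νpre (X ω) := compB νpre hνprebdd
  have bνp : Stmt13Aux.Bdd fun ω => νp (X ω) := compB νp hνpbdd
  have bνq : Stmt13Aux.Bdd fun ω => νq (X ω) := compB νq hνqbdd
  have bνr : Stmt13Aux.Bdd fun ω => νr (X ω) := compB νr hνrbdd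
  have bνβ : Stmt13Aux.Bdd fun ω => νβ (X ω) := compB νβ hνβbdd
  have bf0 : Stmt13Aux.Bdd fun ω => f0 (X ω) := compB f0 hf0bdd
  have iY : Integrable Y μ := Bdd.integrable hY.aestronglyMeasurable bY
  have iT : Integrable T μ := Bdd.integrable hT.aestronglyMeasurable bT
  have iZ : Integrable Z μ := Bdd.integrable hZ.aestronglyMeasurable bZ
  have iq0X : Integrable (fun ω => q0 (X ω)) μ :=
    Bdd.integrable (Measurable.aestronglyMeasurable (by fun_prop)) bq0
  have ip0X : Integrable (fun ω => p0 (X ω)) μ :=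
    Bdd.integrable (Measurable.aestronglyMeasurable (by fun_prop)) bp0
  have ir0X : Integrable (fun ω => r0 (X ω)) μ :=
    Bdd.integrable (Measurable.aestronglyMeasurable (by fun_prop)) br0
  have iβ0X : Integrable (fun ω => β0 (X ω)) μ :=
    Bdd.integrable (Measurable.aestronglyMeasurable (by fun_prop)) bβ0
  have if0X : Integrable (fun ω => f0 (X ω)) μ :=
    Bdd.integrable (Measurable.aestronglyMeasurable (by fun_prop)) bf0
  have iθT : Integrable (fun ω => θ0 (X ω) * T ω) μ :=
    Bdd.integrable (Measurable.aestronglyMeasurable (by fun_prop)) (bθ0.mul bT)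
  have iYθT : Integrable (fun ω => Y ω - θ0 (X ω) * T ω) μ := iY.sub iθT
  have iW : Integrable (fun ω => Y ω - θ0 (X ω) * T ω - f0 (X ω)) μ := iYθT.sub if0X
  have iTZ : Integrable (fun ω => (T ω - p0 (X ω)) * (Z ω - r0 (X ω))) μ :=
    Bdd.integrable (Measurable.aestronglyMeasurable (by fun_prop)) ((bT.sub bp0).mul (bZ.sub br0))
  have ie1 : Integrable (fun ω => Y ω - q0 (X ω)) μ := iY.sub iq0X
  have ie2 : Integrable (fun ω => T ω - p0 (X ω)) μ := iT.sub ip0X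
  have ie3 : Integrable (fun ω => Z ω - r0 (X ω)) μ := iZ.sub ir0X
  have ie4 : Integrable (fun ω => (T ω - p0 (X ω)) * (Z ω - r0 (X ω)) - β0 (X ω)) μ := iTZ.sub iβ0X
  have hE1 : μ[fun ω => Y ω - q0 (X ω)|(MeasurableSpace.comap X inferInstance)] =ᵐ[μ] 0 :=
    condexp_resid_zero hmXle iY (show StronglyMeasurable[(MeasurableSpace.comap X inferInstance)] fun ω => q0 (X ω) from
        ((by fun_prop : Measurable fun x : 𝓧 => q0 x).comp hXmX).stronglyMeasurable) iq0X hq0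
  have hE2 : μ[fun ω => T ω - p0 (X ω)|(MeasurableSpace.comap X inferInstance)] =ᵐ[μ] 0 :=
    condexp_resid_zero hmXle iT (show StronglyMeasurable[(MeasurableSpace.comap X inferInstance)] fun ω => p0 (X ω) from
        ((by fun_prop : Measurable fun x : 𝓧 => p0 x).comp hXmX).stronglyMeasurable) ip0X hp0
  have hE3 : μ[fun ω => Z ω - r0 (X ω)|(MeasurableSpace.comap X inferInstance)] =ᵐ[μ] 0 :=
    condexp_resid_zero hmXle iZ (show StronglyMeasurable[(MeasurableSpace.comap X inferInstance)] fun ω => r0 (X ω) from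
        ((by fun_prop : Measurable fun x : 𝓧 => r0 x).comp hXmX).stronglyMeasurable) ir0X hr0
  have hE4 : μ[fun ω => (T ω - p0 (X ω)) * (Z ω - r0 (X ω)) - β0 (X ω)|(MeasurableSpace.comap X inferInstance)] =ᵐ[μ] 0 :=
    condexp_resid_zero hmXle iTZ (show StronglyMeasurable[(MeasurableSpace.comap X inferInstance)] fun ω => β0 (X ω) from
        ((by fun_prop : Measurable fun x : 𝓧 => β0 x).comp hXmX).stronglyMeasurable) iβ0X hβ0
  have hWX : μ[fun ω => Y ω - θ0 (X ω) * T ω - f0 (X ω)|(MeasurableSpace.comap X inferInstance)] =ᵐ[μ] 0 := by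
    refine ((condExp_condExp_of_le hle hmZXle).symm.trans
      ((condExp_congr_ae hIV).trans ?_))
    rw [condExp_zero]
  have hs1 : μ[fun ω => Y ω - θ0 (X ω) * T ω - f0 (X ω)|(MeasurableSpace.comap X inferInstance)] =ᵐ[μ]
      μ[fun ω => Y ω - θ0 (X ω) * T ω|(MeasurableSpace.comap X inferInstance)] - μ[fun ω => f0 (X ω)|(MeasurableSpace.comap X inferInstance)] := condExp_sub iYθT if0X _
  have hs2 : μ[fun ω => f0 (X ω)|(MeasurableSpace.comap X inferInstance)] = fun ω => f0 (X ω) :=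
    condExp_of_stronglyMeasurable hmXle (show StronglyMeasurable[(MeasurableSpace.comap X inferInstance)] fun ω => f0 (X ω) from
        ((by fun_prop : Measurable fun x : 𝓧 => f0 x).comp hXmX).stronglyMeasurable) if0X
  have hs3 : μ[fun ω => Y ω - θ0 (X ω) * T ω|(MeasurableSpace.comap X inferInstance)] =ᵐ[μ]
      μ[Y|(MeasurableSpace.comap X inferInstance)] - μ[fun ω => θ0 (X ω) * T ω|(MeasurableSpace.comap X inferInstance)] := condExp_sub iY iθT _
  have hs4 : μ[fun ω => θ0 (X ω) * T ω|(MeasurableSpace.comap X inferInstance)] =ᵐ[μ] (fun ω => θ0 (X ω)) * μ[T|(MeasurableSpace.comap X inferInstance)] :=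
    condExp_mul_of_stronglyMeasurable_left (show StronglyMeasurable[(MeasurableSpace.comap X inferInstance)] fun ω => θ0 (X ω) from
        ((by fun_prop : Measurable fun x : 𝓧 => θ0 x).comp hXmX).stronglyMeasurable) iθT iT
  have hkey : ∀ᵐ ω ∂μ, q0 (X ω) - θ0 (X ω) * p0 (X ω) - f0 (X ω) = 0 := by
    filter_upwards [hWX, hs1, hs3, hs4, hq0, hp0] with ω h0 h1 h3 h4 hq hp
    simp only [Pi.sub_apply, Pi.zero_apply, Pi.mul_apply, hs2] at h0 h1 h3 h4
    rw [hq, hp]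
    linarith
  set A0 : Ω → ℝ := fun ω => (Y ω - q0 (X ω)) * (Z ω - r0 (X ω)) - θ0 (X ω) * ((T ω - p0 (X ω)) * (Z ω - r0 (X ω))) with hA0def
  set A1 : Ω → ℝ := fun ω => -(νq (X ω) * (Z ω - r0 (X ω))) - νr (X ω) * (Y ω - q0 (X ω)) - νpre (X ω) * ((T ω - p0 (X ω)) * (Z ω - r0 (X ω)) - β0 (X ω)) + θ0 (X ω) * (νp (X ω) * (Z ω - r0 (X ω))) + θ0 (X ω) * (νr (X ω) * (T ω - p0 (X ω))) with hA1def
  set A2 : Ω → ℝ := fun ω => νq (X ω) * νr (X ω) - θ0 (X ω) * (νp (X ω) * νr (X ω)) + νpre (X ω) * (νp (X ω) * (Z ω - r0 (X ω)) + νr (X ω) * (T ω - p0 (X ω)) + νβ (X ω)) with hA2def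
  set A3 : Ω → ℝ := fun ω => -(νpre (X ω) * (νp (X ω) * νr (X ω))) with hA3def
  set B0 : Ω → ℝ := fun ω => μf (X ω) * β0 (X ω) with hB0def
  set B1 : Ω → ℝ := fun ω => μf (X ω) * νβ (X ω) with hB1def
  have mA0 : Measurable A0 := by rw [hA0def]; fun_prop
  have bA0 : Stmt13Aux.Bdd A0 := by
    rw [hA0def]
    repeat first
      | apply Stmt13Aux.Bdd.sub | apply Stmt13Aux.Bdd.add | apply Stmt13Aux.Bdd.mul
      | apply Stmt13Aux.Bdd.neg | exact bY | exact bT | exact bZ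
      | exact bq0 | exact bp0 | exact br0 | exact bθ0 | exact bβ0 | exact bμf
      | exact bνpre | exact bνp | exact bνq | exact bνr | exact bνβ | exact bf0
  have mA1 : Measurable A1 := by rw [hA1def]; fun_prop
  have bA1 : Stmt13Aux.Bdd A1 := by
    rw [hA1def]
    repeat first
      | apply Stmt13Aux.Bdd.sub | apply Stmt13Aux.Bdd.add | apply Stmt13Aux.Bdd.mul
      | apply Stmt13Aux.Bdd.neg | exact bY | exact bT | exact bZ
      | exact bq0 | exact bp0 | exact br0 | exact bθ0 | exact bβ0 | exact bμf
      | exact bνpre | exact bνp | exact bνq | exact bνr | exact bνβ | exact bf0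
  have mA2 : Measurable A2 := by rw [hA2def]; fun_prop
  have bA2 : Stmt13Aux.Bdd A2 := by
    rw [hA2def]
    repeat first
      | apply Stmt13Aux.Bdd.sub | apply Stmt13Aux.Bdd.add | apply Stmt13Aux.Bdd.mul
      | apply Stmt13Aux.Bdd.neg | exact bY | exact bT | exact bZ
      | exact bq0 | exact bp0 | exact br0 | exact bθ0 | exact bβ0 | exact bμf
      | exact bνpre | exact bνp | exact bνq | exact bνr | exact bνβ | exact bf0
  have mA3 : Measurable A3 := by rw [hA3def]; fun_prop
  have bA3 : Stmt13Aux.Bdd A3 := by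
    rw [hA3def]
    repeat first
      | apply Stmt13Aux.Bdd.sub | apply Stmt13Aux.Bdd.add | apply Stmt13Aux.Bdd.mul
      | apply Stmt13Aux.Bdd.neg | exact bY | exact bT | exact bZ
      | exact bq0 | exact bp0 | exact br0 | exact bθ0 | exact bβ0 | exact bμf
      | exact bνpre | exact bνp | exact bνq | exact bνr | exact bνβ | exact bf0
  have mB0 : Measurable B0 := by rw [hB0def]; fun_prop
  have bB0 : Stmt13Aux.Bdd B0 := by
    rw [hB0def]
    repeat first
      | apply Stmt13Aux.Bdd.sub | apply Stmt13Aux.Bdd.add | apply Stmt13Aux.Bdd.mul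
      | apply Stmt13Aux.Bdd.neg | exact bY | exact bT | exact bZ
      | exact bq0 | exact bp0 | exact br0 | exact bθ0 | exact bβ0 | exact bμf
      | exact bνpre | exact bνp | exact bνq | exact bνr | exact bνβ | exact bf0
  have mB1 : Measurable B1 := by rw [hB1def]; fun_prop
  have bB1 : Stmt13Aux.Bdd B1 := by
    rw [hB1def]
    repeat first
      | apply Stmt13Aux.Bdd.sub | apply Stmt13Aux.Bdd.add | apply Stmt13Aux.Bdd.mul
      | apply Stmt13Aux.Bdd.neg | exact bY | exact bT | exact bZ
      | exact bq0 | exact bp0 | exact br0 | exact bθ0 | exact bβ0 | exact bμf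
      | exact bνpre | exact bνp | exact bνq | exact bνr | exact bνβ | exact bf0
  have hz05 : ∫ ω, A0 ω * B1 ω ∂μ = 0 := by
    have hrw : (fun ω => A0 ω * B1 ω) =ᵐ[μ]
        fun ω => ((Z ω - r0 (X ω)) * (μf (X ω) * νβ (X ω)))
          * (Y ω - θ0 (X ω) * T ω - f0 (X ω)) := by
      filter_upwards [hkey] with ω h
      simp only [hA0def, hB1def]
      linear_combination (-((Z ω - r0 (X ω)) * (μf (X ω) * νβ (X ω)))) * h
    rw [integral_congr_ae hrw]
    refine integral_mul_eq_zero hmZXle ?_ ((bZ.sub br0).mul (bμf.mul bνβ)) iW hIV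
    show StronglyMeasurable[(MeasurableSpace.comap (fun ω => (Z ω, X ω)) inferInstance)] fun ω => (Z ω - r0 (X ω)) * (μf (X ω) * νβ (X ω))
    have hφ : Measurable (fun zx : ℝ × 𝓧 => (zx.1 - r0 zx.2) * (μf zx.2 * νβ zx.2)) := by fun_prop
    exact (hφ.comp hZXm).stronglyMeasurable
  have hz50 : ∫ ω, B1 ω * A0 ω ∂μ = 0 := by
    rw [show (fun ω => B1 ω * A0 ω) = fun ω => A0 ω * B1 ω from funext fun ω => mul_comm _ _]
    exact hz05
  have hz14 : ∫ ω, A1 ω * B0 ω ∂μ = 0 := by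
    have hrw : (fun ω => A1 ω * B0 ω) = fun ω =>
        (-(νr (X ω) * (μf (X ω) * β0 (X ω)))) * (Y ω - q0 (X ω))
        + (θ0 (X ω) * νr (X ω) * (μf (X ω) * β0 (X ω))) * (T ω - p0 (X ω))
        + ((θ0 (X ω) * νp (X ω) - νq (X ω)) * (μf (X ω) * β0 (X ω))) * (Z ω - r0 (X ω))
        + (-(νpre (X ω) * (μf (X ω) * β0 (X ω))))
          * ((T ω - p0 (X ω)) * (Z ω - r0 (X ω)) - β0 (X ω)) := by
      funext ω; simp only [hA1def, hB0def]; ring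
    have i1 : Integrable (fun ω => (-(νr (X ω) * (μf (X ω) * β0 (X ω)))) * (Y ω - q0 (X ω))) μ :=
      Bdd.integrable (Measurable.aestronglyMeasurable (by fun_prop))
        (((bνr.mul (bμf.mul bβ0)).neg).mul (bY.sub bq0))
    have i2 : Integrable (fun ω => (θ0 (X ω) * νr (X ω) * (μf (X ω) * β0 (X ω))) * (T ω - p0 (X ω))) μ :=
      Bdd.integrable (Measurable.aestronglyMeasurable (by fun_prop))
        (((bθ0.mul bνr).mul (bμf.mul bβ0)).mul (bT.sub bp0))
    have i3 : Integrable (fun ω => ((θ0 (X ω) * νp (X ω) - νq (X ω)) * (μf (X ω) * β0 (X ω))) * (Z ω - r0 (X ω))) μ :=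
      Bdd.integrable (Measurable.aestronglyMeasurable (by fun_prop))
        ((((bθ0.mul bνp).sub bνq).mul (bμf.mul bβ0)).mul (bZ.sub br0))
    have i4 : Integrable (fun ω => (-(νpre (X ω) * (μf (X ω) * β0 (X ω))))
        * ((T ω - p0 (X ω)) * (Z ω - r0 (X ω)) - β0 (X ω))) μ :=
      Bdd.integrable (Measurable.aestronglyMeasurable (by fun_prop))
        (((bνpre.mul (bμf.mul bβ0)).neg).mul ((bT.sub bp0).mul (bZ.sub br0) |>.sub bβ0))
    have i12 : Integrable (fun ω => (-(νr (X ω) * (μf (X ω) * β0 (X ω)))) * (Y ω - q0 (X ω))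
        + (θ0 (X ω) * νr (X ω) * (μf (X ω) * β0 (X ω))) * (T ω - p0 (X ω))) μ := i1.add i2
    have i123 : Integrable (fun ω => (-(νr (X ω) * (μf (X ω) * β0 (X ω)))) * (Y ω - q0 (X ω))
        + (θ0 (X ω) * νr (X ω) * (μf (X ω) * β0 (X ω))) * (T ω - p0 (X ω))
        + ((θ0 (X ω) * νp (X ω) - νq (X ω)) * (μf (X ω) * β0 (X ω))) * (Z ω - r0 (X ω))) μ := i12.add i3
    rw [hrw, integral_add i123 i4, integral_add i12 i3, integral_add i1 i2]
    have z1 : ∫ ω, (-(νr (X ω) * (μf (X ω) * β0 (X ω)))) * (Y ω - q0 (X ω)) ∂μ = 0 :=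
      integral_mul_eq_zero hmXle
        (show StronglyMeasurable[(MeasurableSpace.comap X inferInstance)] fun ω => -(νr (X ω) * (μf (X ω) * β0 (X ω))) from
        ((by fun_prop : Measurable fun x : 𝓧 => -(νr x * (μf x * β0 x))).comp hXmX).stronglyMeasurable)
        ((bνr.mul (bμf.mul bβ0)).neg) ie1 hE1
    have z2 : ∫ ω, (θ0 (X ω) * νr (X ω) * (μf (X ω) * β0 (X ω))) * (T ω - p0 (X ω)) ∂μ = 0 :=
      integral_mul_eq_zero hmXle
        (show StronglyMeasurable[(MeasurableSpace.comap X inferInstance)] fun ω => θ0 (X ω) * νr (X ω) * (μf (X ω) * β0 (X ω)) from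
        ((by fun_prop : Measurable fun x : 𝓧 => θ0 x * νr x * (μf x * β0 x)).comp hXmX).stronglyMeasurable)
        ((bθ0.mul bνr).mul (bμf.mul bβ0)) ie2 hE2
    have z3 : ∫ ω, ((θ0 (X ω) * νp (X ω) - νq (X ω)) * (μf (X ω) * β0 (X ω))) * (Z ω - r0 (X ω)) ∂μ = 0 :=
      integral_mul_eq_zero hmXle
        (show StronglyMeasurable[(MeasurableSpace.comap X inferInstance)] fun ω => (θ0 (X ω) * νp (X ω) - νq (X ω)) * (μf (X ω) * β0 (X ω)) from
        ((by fun_prop : Measurable fun x : 𝓧 => (θ0 x * νp x - νq x) * (μf x * β0 x)).comp hXmX).stronglyMeasurable)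
        (((bθ0.mul bνp).sub bνq).mul (bμf.mul bβ0)) ie3 hE3
    have z4 : ∫ ω, (-(νpre (X ω) * (μf (X ω) * β0 (X ω))))
        * ((T ω - p0 (X ω)) * (Z ω - r0 (X ω)) - β0 (X ω)) ∂μ = 0 :=
      integral_mul_eq_zero hmXle
        (show StronglyMeasurable[(MeasurableSpace.comap X inferInstance)] fun ω => -(νpre (X ω) * (μf (X ω) * β0 (X ω))) from
        ((by fun_prop : Measurable fun x : 𝓧 => -(νpre x * (μf x * β0 x))).comp hXmX).stronglyMeasurable)
        ((bνpre.mul (bμf.mul bβ0)).neg) ie4 hE4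
    rw [z1, z2, z3, z4]; norm_num
  have hz41 : ∫ ω, B0 ω * A1 ω ∂μ = 0 := by
    rw [show (fun ω => B0 ω * A1 ω) = fun ω => A1 ω * B0 ω from funext fun ω => mul_comm _ _]
    exact hz14
  constructor
  · have hLfun : (fun st : ℝ × ℝ => ∫ ω, ((Y ω - (q0 (X ω) + st.1 * νq (X ω))) * (Z ω - (r0 (X ω) + st.1 * νr (X ω)))
        - (θ0 (X ω) + st.1 * νpre (X ω))
          * ((T ω - (p0 (X ω) + st.1 * νp (X ω))) * (Z ω - (r0 (X ω) + st.1 * νr (X ω)))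
              - (β0 (X ω) + st.1 * νβ (X ω)))
        - (θ0 (X ω) + st.2 * μf (X ω)) * (β0 (X ω) + st.1 * νβ (X ω))) ^ 2 ∂μ)
        = fun st : ℝ × ℝ => ((∫ ω, A0 ω * A0 ω ∂μ) + st.1 * (∫ ω, A0 ω * A1 ω ∂μ + ∫ ω, A1 ω * A0 ω ∂μ) + st.1 ^ 2 * (∫ ω, A0 ω * A2 ω ∂μ + ∫ ω, A2 ω * A0 ω ∂μ + ∫ ω, A1 ω * A1 ω ∂μ) + st.1 ^ 3 * (∫ ω, A0 ω * A3 ω ∂μ + ∫ ω, A3 ω * A0 ω ∂μ + ∫ ω, A1 ω * A2 ω ∂μ + ∫ ω, A2 ω * A1 ω ∂μ) + st.1 ^ 4 * (∫ ω, A1 ω * A3 ω ∂μ + ∫ ω, A3 ω * A1 ω ∂μ + ∫ ω, A2 ω * A2 ω ∂μ) + st.1 ^ 5 * (∫ ω, A2 ω * A3 ω ∂μ + ∫ ω, A3 ω * A2 ω ∂μ) + st.1 ^ 6 * (∫ ω, A3 ω * A3 ω ∂μ))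
          + st.2 * ((-(∫ ω, A0 ω * B0 ω ∂μ + ∫ ω, B0 ω * A0 ω ∂μ)) + st.1 * (-(∫ ω, A1 ω * B0 ω ∂μ + ∫ ω, B0 ω * A1 ω ∂μ + ∫ ω, A0 ω * B1 ω ∂μ + ∫ ω, B1 ω * A0 ω ∂μ)) + st.1 ^ 2 * (-(∫ ω, A2 ω * B0 ω ∂μ + ∫ ω, B0 ω * A2 ω ∂μ + ∫ ω, A1 ω * B1 ω ∂μ + ∫ ω, B1 ω * A1 ω ∂μ)) + st.1 ^ 3 * (-(∫ ω, A3 ω * B0 ω ∂μ + ∫ ω, B0 ω * A3 ω ∂μ + ∫ ω, A2 ω * B1 ω ∂μ + ∫ ω, B1 ω * A2 ω ∂μ)) + st.1 ^ 4 * (-(∫ ω, A3 ω * B1 ω ∂μ + ∫ ω, B1 ω * A3 ω ∂μ)))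
          + st.2 ^ 2 * ((∫ ω, B0 ω * B0 ω ∂μ) + st.1 * (∫ ω, B0 ω * B1 ω ∂μ + ∫ ω, B1 ω * B0 ω ∂μ) + st.1 ^ 2 * (∫ ω, B1 ω * B1 ω ∂μ)) := by
      funext st
      have h2 : (fun ω => ((Y ω - (q0 (X ω) + st.1 * νq (X ω))) * (Z ω - (r0 (X ω) + st.1 * νr (X ω)))
        - (θ0 (X ω) + st.1 * νpre (X ω))
          * ((T ω - (p0 (X ω) + st.1 * νp (X ω))) * (Z ω - (r0 (X ω) + st.1 * νr (X ω)))
              - (β0 (X ω) + st.1 * νβ (X ω)))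
        - (θ0 (X ω) + st.2 * μf (X ω)) * (β0 (X ω) + st.1 * νβ (X ω))) ^ 2)
          = fun ω => ((1:ℝ) * A0 ω + st.1 * A1 ω + st.1 ^ 2 * A2 ω + st.1 ^ 3 * A3 ω
            + (-st.2) * B0 ω + (-(st.2 * st.1)) * B1 ω) ^ 2 := by
        funext ω
        simp only [hA0def, hA1def, hA2def, hA3def, hB0def, hB1def]
        ring
      rw [h2, split6 A0 A1 A2 A3 B0 B1 mA0 mA1 mA2 mA3 mB0 mB1 bA0 bA1 bA2 bA3 bB0 bB1]
      ring
    rw [hLfun]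
    fun_prop
  · have hinner : ∀ s : ℝ, (fun t : ℝ => ∫ ω, ((Y ω - (q0 (X ω) + s * νq (X ω))) * (Z ω - (r0 (X ω) + s * νr (X ω)))
        - (θ0 (X ω) + s * νpre (X ω))
          * ((T ω - (p0 (X ω) + s * νp (X ω))) * (Z ω - (r0 (X ω) + s * νr (X ω)))
              - (β0 (X ω) + s * νβ (X ω)))
        - (θ0 (X ω) + t * μf (X ω)) * (β0 (X ω) + s * νβ (X ω))) ^ 2 ∂μ)
        = fun t : ℝ => ((∫ ω, A0 ω * A0 ω ∂μ) + s * (∫ ω, A0 ω * A1 ω ∂μ + ∫ ω, A1 ω * A0 ω ∂μ) + s ^ 2 * (∫ ω, A0 ω * A2 ω ∂μ + ∫ ω, A2 ω * A0 ω ∂μ + ∫ ω, A1 ω * A1 ω ∂μ) + s ^ 3 * (∫ ω, A0 ω * A3 ω ∂μ + ∫ ω, A3 ω * A0 ω ∂μ + ∫ ω, A1 ω * A2 ω ∂μ + ∫ ω, A2 ω * A1 ω ∂μ) + s ^ 4 * (∫ ω, A1 ω * A3 ω ∂μ + ∫ ω, A3 ω * A1 ω ∂μ + ∫ ω, A2 ω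 * A2 ω ∂μ) + s ^ 5 * (∫ ω, A2 ω * A3 ω ∂μ + ∫ ω, A3 ω * A2 ω ∂μ) + s ^ 6 * (∫ ω, A3 ω * A3 ω ∂μ))
          + t * ((-(∫ ω, A0 ω * B0 ω ∂μ + ∫ ω, B0 ω * A0 ω ∂μ)) + s * (-(∫ ω, A1 ω * B0 ω ∂μ + ∫ ω, B0 ω * A1 ω ∂μ + ∫ ω, A0 ω * B1 ω ∂μ + ∫ ω, B1 ω * A0 ω ∂μ)) + s ^ 2 * (-(∫ ω, A2 ω * B0 ω ∂μ + ∫ ω, B0 ω * A2 ω ∂μ + ∫ ω, A1 ω * B1 ω ∂μ + ∫ ω, B1 ω * A1 ω ∂μ)) + s ^ 3 * (-(∫ ω, A3 ω * B0 ω ∂μ + ∫ ω, B0 ω * A3 ω ∂μ + ∫ ω, A2 ω * B1 ω ∂μ + ∫ ω, B1 ω * A2 ω ∂μ)) + s ^ 4 * (-(∫ ω, A3 ω * B1 ω ∂μ + ∫ ω, B1 ω * A3 ω ∂μ)))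
          + t ^ 2 * ((∫ ω, B0 ω * B0 ω ∂μ) + s * (∫ ω, B0 ω * B1 ω ∂μ + ∫ ω, B1 ω * B0 ω ∂μ) + s ^ 2 * (∫ ω, B1 ω * B1 ω ∂μ)) := by
      intro s
      funext t
      have h2 : (fun ω => ((Y ω - (q0 (X ω) + s * νq (X ω))) * (Z ω - (r0 (X ω) + s * νr (X ω)))
        - (θ0 (X ω) + s * νpre (X ω))
          * ((T ω - (p0 (X ω) + s * νp (X ω))) * (Z ω - (r0 (X ω) + s * νr (X ω)))
              - (β0 (X ω) + s * νβ (X ω)))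
        - (θ0 (X ω) + t * μf (X ω)) * (β0 (X ω) + s * νβ (X ω))) ^ 2)
          = fun ω => ((1:ℝ) * A0 ω + s * A1 ω + s ^ 2 * A2 ω + s ^ 3 * A3 ω
            + (-t) * B0 ω + (-(t * s)) * B1 ω) ^ 2 := by
        funext ω
        simp only [hA0def, hA1def, hA2def, hA3def, hB0def, hB1def]
        ring
      rw [h2, split6 A0 A1 A2 A3 B0 B1 mA0 mA1 mA2 mA3 mB0 mB1 bA0 bA1 bA2 bA3 bB0 bB1]
      ring
    have houter : (fun s : ℝ => deriv (fun t : ℝ => ∫ ω, ((Y ω - (q0 (X ω) + s * νq (X ω))) * (Z ω - (r0 (X ω) + s * νr (X ω)))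
        - (θ0 (X ω) + s * νpre (X ω))
          * ((T ω - (p0 (X ω) + s * νp (X ω))) * (Z ω - (r0 (X ω) + s * νr (X ω)))
              - (β0 (X ω) + s * νβ (X ω)))
        - (θ0 (X ω) + t * μf (X ω)) * (β0 (X ω) + s * νβ (X ω))) ^ 2 ∂μ) 0)
        = fun s : ℝ => ((-(∫ ω, A0 ω * B0 ω ∂μ + ∫ ω, B0 ω * A0 ω ∂μ)) + s * (-(∫ ω, A1 ω * B0 ω ∂μ + ∫ ω, B0 ω * A1 ω ∂μ + ∫ ω, A0 ω * B1 ω ∂μ + ∫ ω, B1 ω * A0 ω ∂μ)) + s ^ 2 * (-(∫ ω, A2 ω * B0 ω ∂μ + ∫ ω, B0 ω * A2 ω ∂μ + ∫ ω, A1 ω * B1 ω ∂μ + ∫ ω, B1 ω * A1 ω ∂μ)) + s ^ 3 * (-(∫ ω, A3 ω * B0 ω ∂μ + ∫ ω, B0 ω * A3 ω ∂μ + ∫ ω, A2 ω * B1 ω ∂μ + ∫ ω, B1 ω * A2 ω ∂μ)) + s ^ 4 * (-(∫ ω, A3 ω * B1 ω ∂μ + ∫ ω, B1 ω * A3 ω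 ∂μ))) := by
      funext s
      rw [hinner s, deriv_quad]
    rw [houter, deriv_quartic, hz05, hz50, hz14, hz41]
    norm_num
end

section
/- (Lemma: orthogonality of the projected re-weighted DRIV loss with the optimal instrument.) Fix bounded measurable direction functions μ, ν_pre, ν_p, ν_q, ν_V of X and ν_h of (Z,X). Writing θ_s = θ0 + s·ν_pre, p_s = p0 + s·ν_p, q_s = q0 + s·ν_q, h_s = h0 + s·ν_h, V_s = V0 + s·ν_V, define for (s,t) ∈ ℝ² the loss L_{π,rw}(s,t) = E[( (Y − q_s(X))·(h_s(Z,X) − p_s(X)) − θ_s(X)·((T − p_s(X))·(h_s(Z,X) − p_s(X)) − V_s(X)) − (θ0 + t·μ)(X)·V_s(X) )²], where the final-stage model is evaluated at the true effect θ0. Then L_{π,rw} is a polynomial in (s,t) and its mixed partial derivative ∂²L_{π,rw}/∂s∂t at (0,0) equals 0. (Note that the required conditional moment restriction E[(Y − q0(X) − θ0(X)·(T − p0(X)))·(h0(Z,X) − p0(X)) | X] = 0 follows from the instrumental-variable moment condition.) -/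
open MeasureTheory

namespace Stmt14Aux

variable {Ω : Type*} [MeasurableSpace Ω]

def MB (f : Ω → ℝ) : Prop := Measurable f ∧ ∃ C, ∀ ω, |f ω| ≤ C

lemma MB.mul {f g : Ω → ℝ} (hf : MB f) (hg : MB g) : MB (fun ω => f ω * g ω) := by
  obtain ⟨hfm, Cf, hCf⟩ := hf
  obtain ⟨hgm, Cg, hCg⟩ := hg
  refine ⟨hfm.mul hgm, Cf * Cg, fun ω => ?_⟩
  show |f ω * g ω| ≤ Cf * Cg
  rw [abs_mul]
  exact mul_le_mul (hCf ω) (hCg ω) (abs_nonneg _) ((abs_nonneg _).trans (hCf ω))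

lemma MB.add {f g : Ω → ℝ} (hf : MB f) (hg : MB g) : MB (fun ω => f ω + g ω) := by
  obtain ⟨hfm, Cf, hCf⟩ := hf
  obtain ⟨hgm, Cg, hCg⟩ := hg
  refine ⟨hfm.add hgm, Cf + Cg, fun ω => ?_⟩
  show |f ω + g ω| ≤ Cf + Cg
  exact (abs_add_le _ _).trans (add_le_add (hCf ω) (hCg ω))

lemma MB.neg {f : Ω → ℝ} (hf : MB f) : MB (fun ω => -(f ω)) := by
  obtain ⟨hfm, Cf, hCf⟩ := hf
  refine ⟨hfm.neg, Cf, fun ω => ?_⟩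
  show |-(f ω)| ≤ Cf
  rw [abs_neg]; exact hCf ω

lemma MB.sub {f g : Ω → ℝ} (hf : MB f) (hg : MB g) : MB (fun ω => f ω - g ω) := by
  obtain ⟨hfm, Cf, hCf⟩ := hf
  obtain ⟨hgm, Cg, hCg⟩ := hg
  refine ⟨hfm.sub hgm, Cf + Cg, fun ω => ?_⟩
  show |f ω - g ω| ≤ Cf + Cg
  rw [sub_eq_add_neg]
  refine (abs_add_le _ _).trans ?_
  rw [abs_neg]
  exact add_le_add (hCf ω) (hCg ω)

lemma MB.sq {f : Ω → ℝ} (hf : MB f) : MB (fun ω => f ω ^ 2) := by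
  obtain ⟨hm, C, hC⟩ := hf
  refine ⟨hm.pow_const 2, C ^ 2, fun ω => ?_⟩
  show |f ω ^ 2| ≤ C ^ 2
  rw [abs_pow]
  exact pow_le_pow_left₀ (abs_nonneg _) (hC ω) 2

lemma MB.integrable {f : Ω → ℝ} {μ : Measure Ω} [IsFiniteMeasure μ] (hf : MB f) :
    Integrable f μ := by
  obtain ⟨hm, C, hC⟩ := hf
  exact ⟨hm.aestronglyMeasurable,
    HasFiniteIntegral.of_bounded (C := C) (ae_of_all _ fun ω => by
      simpa [Real.norm_eq_abs] using hC ω)⟩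

lemma int_mul_congr {m0 : MeasurableSpace Ω} {μ : Measure Ω} [IsFiniteMeasure μ]
    {m : MeasurableSpace Ω} (hm : m ≤ m0) {f f' g : Ω → ℝ}
    (hf : Integrable f μ) (hfg : Integrable (fun ω => g ω * f ω) μ)
    (hcond : μ[f|m] =ᵐ[μ] f') (hg : StronglyMeasurable[m] g) :
    ∫ ω, f ω * g ω ∂μ = ∫ ω, f' ω * g ω ∂μ := by
  have hpull : μ[fun ω => g ω * f ω|m] =ᵐ[μ] fun ω => g ω * (μ[f|m]) ω :=
    condExp_mul_of_stronglyMeasurable_left hg hfg hf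
  calc ∫ ω, f ω * g ω ∂μ = ∫ ω, g ω * f ω ∂μ :=
        integral_congr_ae (ae_of_all _ fun ω => mul_comm _ _)
    _ = ∫ ω, (μ[fun ω => g ω * f ω|m]) ω ∂μ := (integral_condExp hm).symm
    _ = ∫ ω, g ω * (μ[f|m]) ω ∂μ := integral_congr_ae hpull
    _ = ∫ ω, g ω * f' ω ∂μ := integral_congr_ae (hcond.mono fun ω h => by
        show g ω * (μ[f|m]) ω = g ω * f' ω
        rw [h])
    _ = ∫ ω, f' ω * g ω ∂μ := integral_congr_ae (ae_of_all _ fun ω => mul_comm _ _)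

lemma int_mul_zero {m0 : MeasurableSpace Ω} {μ : Measure Ω} [IsFiniteMeasure μ]
    {m : MeasurableSpace Ω} (hm : m ≤ m0) {f g : Ω → ℝ}
    (hf : Integrable f μ) (hfg : Integrable (fun ω => g ω * f ω) μ)
    (hcond : μ[f|m] =ᵐ[μ] 0) (hg : StronglyMeasurable[m] g) :
    ∫ ω, f ω * g ω ∂μ = 0 := by
  rw [int_mul_congr hm hf hfg hcond hg]
  simp

lemma deriv_quad (a b c : ℝ) : deriv (fun t : ℝ => a + (t * b + t ^ 2 * c)) 0 = b := by
  have h1 : HasDerivAt (fun t : ℝ => t * b) b 0 := by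
    simpa using (hasDerivAt_id (0 : ℝ)).mul_const b
  have h2 : HasDerivAt (fun t : ℝ => t ^ 2 * c) 0 0 := by
    simpa using (hasDerivAt_pow 2 (0 : ℝ)).mul_const c
  simpa using ((h1.add h2).const_add a).deriv

lemma deriv_quart (a b c d e : ℝ) :
    deriv (fun s : ℝ => a + (s * b + (s ^ 2 * c + (s ^ 3 * d + s ^ 4 * e)))) 0 = b := by
  have h1 : HasDerivAt (fun s : ℝ => s * b) b 0 := by
    simpa using (hasDerivAt_id (0 : ℝ)).mul_const b
  have h2 : HasDerivAt (fun s : ℝ => s ^ 2 * c) 0 0 := by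
    simpa using (hasDerivAt_pow 2 (0 : ℝ)).mul_const c
  have h3 : HasDerivAt (fun s : ℝ => s ^ 3 * d) 0 0 := by
    simpa using (hasDerivAt_pow 3 (0 : ℝ)).mul_const d
  have h4 : HasDerivAt (fun s : ℝ => s ^ 4 * e) 0 0 := by
    simpa using (hasDerivAt_pow 4 (0 : ℝ)).mul_const e
  simpa using ((h1.add (h2.add (h3.add h4))).const_add a).deriv

lemma aux (μ : Measure Ω) [IsProbabilityMeasure μ]
    (a0 a1 a2 a3 b0 b1 : Ω → ℝ)
    (ma0 : MB a0) (ma1 : MB a1) (ma2 : MB a2) (ma3 : MB a3) (mb0 : MB b0) (mb1 : MB b1)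
    (horth : ∫ ω, (a0 ω * b1 ω + a1 ω * b0 ω) ∂μ = 0) :
    ContDiff ℝ (⊤ : ℕ∞) (fun st : ℝ × ℝ => ∫ ω, (a0 ω + st.1 * a1 ω + st.1 ^ 2 * a2 ω + st.1 ^ 3 * a3 ω - st.2 * (b0 ω + st.1 * b1 ω)) ^ 2 ∂μ)
    ∧ deriv (fun s : ℝ => deriv (fun t : ℝ => ∫ ω, (a0 ω + s * a1 ω + s ^ 2 * a2 ω + s ^ 3 * a3 ω - t * (b0 ω + s * b1 ω)) ^ 2 ∂μ) 0) 0 = 0 := by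
  have key : ∀ s t : ℝ, ∫ ω, (a0 ω + s * a1 ω + s ^ 2 * a2 ω + s ^ 3 * a3 ω - t * (b0 ω + s * b1 ω)) ^ 2 ∂μ = ((∫ ω, a0 ω * a0 ω ∂μ) + (s * (2 * (∫ ω, a0 ω * a1 ω ∂μ)) + (s ^ 2 * (2 * (∫ ω, a0 ω * a2 ω ∂μ) + (∫ ω, a1 ω * a1 ω ∂μ)) + (s ^ 3 * (2 * (∫ ω, a0 ω * a3 ω ∂μ) + 2 * (∫ ω, a1 ω * a2 ω ∂μ)) + (s ^ 4 * (2 * (∫ ω, a1 ω * a3 ω ∂μ) + (∫ ω, a2 ω * a2 ω ∂μ)) + (s ^ 5 * (2 * (∫ ω, a2 ω * a3 ω ∂μ)) + s ^ 6 * (∫ ω, a3 ω * a3 ω ∂μ))))))) + (t * ((-2) * (∫ ω, a0 ω * b0 ω ∂μ) + (s * ((-2) * ((∫ ω, a0 ω * b1 ω ∂μ) + (∫ ω, a1 ω * b0 ω ∂μ))) + (s ^ 2 * ((-2) * ((∫ ω, a1 ω * b1 ω ∂μ) + (∫ ω, a2 ω * b0 ω ∂μ))) + (s ^ 3 * ((-2)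 * ((∫ ω, a2 ω * b1 ω ∂μ) + (∫ ω, a3 ω * b0 ω ∂μ))) + s ^ 4 * ((-2) * (∫ ω, a3 ω * b1 ω ∂μ)))))) + t ^ 2 * ((∫ ω, b0 ω * b0 ω ∂μ) + (s * (2 * (∫ ω, b0 ω * b1 ω ∂μ)) + s ^ 2 * (∫ ω, b1 ω * b1 ω ∂μ)))) := by
    intro s t
    have i0 : Integrable (fun ω => a0 ω * a0 ω) μ := (ma0.mul ma0).integrable
    have i1 : Integrable (fun ω => s * 2 * (a0 ω * a1 ω)) μ := ((ma0.mul ma1).integrable).const_mul _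
    have i2 : Integrable (fun ω => s ^ 2 * 2 * (a0 ω * a2 ω)) μ := ((ma0.mul ma2).integrable).const_mul _
    have i3 : Integrable (fun ω => s ^ 3 * 2 * (a0 ω * a3 ω)) μ := ((ma0.mul ma3).integrable).const_mul _
    have i4 : Integrable (fun ω => s ^ 2 * (a1 ω * a1 ω)) μ := ((ma1.mul ma1).integrable).const_mul _
    have i5 : Integrable (fun ω => s ^ 3 * 2 * (a1 ω * a2 ω)) μ := ((ma1.mul ma2).integrable).const_mul _
    have i6 : Integrable (fun ω => s ^ 4 * 2 * (a1 ω * a3 ω)) μ := ((ma1.mul ma3).integrable).const_mul _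
    have i7 : Integrable (fun ω => s ^ 4 * (a2 ω * a2 ω)) μ := ((ma2.mul ma2).integrable).const_mul _
    have i8 : Integrable (fun ω => s ^ 5 * 2 * (a2 ω * a3 ω)) μ := ((ma2.mul ma3).integrable).const_mul _
    have i9 : Integrable (fun ω => s ^ 6 * (a3 ω * a3 ω)) μ := ((ma3.mul ma3).integrable).const_mul _
    have i10 : Integrable (fun ω => t * (-2) * (a0 ω * b0 ω)) μ := ((ma0.mul mb0).integrable).const_mul _
    have i11 : Integrable (fun ω => s * t * (-2) * (a0 ω * b1 ω)) μ := ((ma0.mul mb1).integrable).const_mul _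
    have i12 : Integrable (fun ω => s * t * (-2) * (a1 ω * b0 ω)) μ := ((ma1.mul mb0).integrable).const_mul _
    have i13 : Integrable (fun ω => s ^ 2 * t * (-2) * (a1 ω * b1 ω)) μ := ((ma1.mul mb1).integrable).const_mul _
    have i14 : Integrable (fun ω => s ^ 2 * t * (-2) * (a2 ω * b0 ω)) μ := ((ma2.mul mb0).integrable).const_mul _
    have i15 : Integrable (fun ω => s ^ 3 * t * (-2) * (a2 ω * b1 ω)) μ := ((ma2.mul mb1).integrable).const_mul _
    have i16 : Integrable (fun ω => s ^ 3 * t * (-2) * (a3 ω * b0 ω)) μ := ((ma3.mul mb0).integrable).const_mul _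
    have i17 : Integrable (fun ω => s ^ 4 * t * (-2) * (a3 ω * b1 ω)) μ := ((ma3.mul mb1).integrable).const_mul _
    have i18 : Integrable (fun ω => t ^ 2 * (b0 ω * b0 ω)) μ := ((mb0.mul mb0).integrable).const_mul _
    have i19 : Integrable (fun ω => s * t ^ 2 * 2 * (b0 ω * b1 ω)) μ := ((mb0.mul mb1).integrable).const_mul _
    have i20 : Integrable (fun ω => s ^ 2 * t ^ 2 * (b1 ω * b1 ω)) μ := ((mb1.mul mb1).integrable).const_mul _
    have T20 : Integrable (fun ω => s ^ 2 * t ^ 2 * (b1 ω * b1 ω)) μ := i20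
    have T19 : Integrable (fun ω => s * t ^ 2 * 2 * (b0 ω * b1 ω) + (s ^ 2 * t ^ 2 * (b1 ω * b1 ω))) μ := i19.add T20
    have T18 : Integrable (fun ω => t ^ 2 * (b0 ω * b0 ω) + (s * t ^ 2 * 2 * (b0 ω * b1 ω) + (s ^ 2 * t ^ 2 * (b1 ω * b1 ω)))) μ := i18.add T19
    have T17 : Integrable (fun ω => s ^ 4 * t * (-2) * (a3 ω * b1 ω) + (t ^ 2 * (b0 ω * b0 ω) + (s * t ^ 2 * 2 * (b0 ω * b1 ω) + (s ^ 2 * t ^ 2 * (b1 ω * b1 ω))))) μ := i17.add T18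
    have T16 : Integrable (fun ω => s ^ 3 * t * (-2) * (a3 ω * b0 ω) + (s ^ 4 * t * (-2) * (a3 ω * b1 ω) + (t ^ 2 * (b0 ω * b0 ω) + (s * t ^ 2 * 2 * (b0 ω * b1 ω) + (s ^ 2 * t ^ 2 * (b1 ω * b1 ω)))))) μ := i16.add T17
    have T15 : Integrable (fun ω => s ^ 3 * t * (-2) * (a2 ω * b1 ω) + (s ^ 3 * t * (-2) * (a3 ω * b0 ω) + (s ^ 4 * t * (-2) * (a3 ω * b1 ω) + (t ^ 2 * (b0 ω * b0 ω) + (s * t ^ 2 * 2 * (b0 ω * b1 ω) + (s ^ 2 * t ^ 2 * (b1 ω * b1 ω))))))) μ := i15.add T16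
    have T14 : Integrable (fun ω => s ^ 2 * t * (-2) * (a2 ω * b0 ω) + (s ^ 3 * t * (-2) * (a2 ω * b1 ω) + (s ^ 3 * t * (-2) * (a3 ω * b0 ω) + (s ^ 4 * t * (-2) * (a3 ω * b1 ω) + (t ^ 2 * (b0 ω * b0 ω) + (s * t ^ 2 * 2 * (b0 ω * b1 ω) + (s ^ 2 * t ^ 2 * (b1 ω * b1 ω)))))))) μ := i14.add T15
    have T13 : Integrable (fun ω => s ^ 2 * t * (-2) * (a1 ω * b1 ω) + (s ^ 2 * t * (-2) * (a2 ω * b0 ω) + (s ^ 3 * t * (-2) * (a2 ω * b1 ω) + (s ^ 3 * t * (-2) * (a3 ω * b0 ω) + (s ^ 4 * t * (-2) * (a3 ω * b1 ω) + (t ^ 2 * (b0 ω * b0 ω) + (s * t ^ 2 * 2 * (b0 ω * b1 ω) + (s ^ 2 * t ^ 2 * (b1 ω * b1 ω))))))))) μ := i13.add T14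
    have T12 : Integrable (fun ω => s * t * (-2) * (a1 ω * b0 ω) + (s ^ 2 * t * (-2) * (a1 ω * b1 ω) + (s ^ 2 * t * (-2) * (a2 ω * b0 ω) + (s ^ 3 * t * (-2) * (a2 ω * b1 ω) + (s ^ 3 * t * (-2) * (a3 ω * b0 ω) + (s ^ 4 * t * (-2) * (a3 ω * b1 ω) + (t ^ 2 * (b0 ω * b0 ω) + (s * t ^ 2 * 2 * (b0 ω * b1 ω) + (s ^ 2 * t ^ 2 * (b1 ω * b1 ω)))))))))) μ := i12.add T13
    have T11 : Integrable (fun ω => s * t * (-2) * (a0 ω * b1 ω) + (s * t * (-2) * (a1 ω * b0 ω) + (s ^ 2 * t * (-2) * (a1 ω * b1 ω) + (s ^ 2 * t * (-2) * (a2 ω * b0 ω) + (s ^ 3 * t * (-2) * (a2 ω * b1 ω) + (s ^ 3 * t * (-2) * (a3 ω * b0 ω) + (s ^ 4 * t * (-2) * (a3 ω * b1 ω) + (t ^ 2 * (b0 ω * b0 ω) + (s * t ^ 2 * 2 * (b0 ω * b1 ω) + (s ^ 2 * t ^ 2 * (b1 ω * b1 ω))))))))))) μ := i11.add T12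
    have T10 : Integrable (fun ω => t * (-2) * (a0 ω * b0 ω) + (s * t * (-2) * (a0 ω * b1 ω) + (s * t * (-2) * (a1 ω * b0 ω) + (s ^ 2 * t * (-2) * (a1 ω * b1 ω) + (s ^ 2 * t * (-2) * (a2 ω * b0 ω) + (s ^ 3 * t * (-2) * (a2 ω * b1 ω) + (s ^ 3 * t * (-2) * (a3 ω * b0 ω) + (s ^ 4 * t * (-2) * (a3 ω * b1 ω) + (t ^ 2 * (b0 ω * b0 ω) + (s * t ^ 2 * 2 * (b0 ω * b1 ω) + (s ^ 2 * t ^ 2 * (b1 ω * b1 ω)))))))))))) μ := i10.add T11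
    have T9 : Integrable (fun ω => s ^ 6 * (a3 ω * a3 ω) + (t * (-2) * (a0 ω * b0 ω) + (s * t * (-2) * (a0 ω * b1 ω) + (s * t * (-2) * (a1 ω * b0 ω) + (s ^ 2 * t * (-2) * (a1 ω * b1 ω) + (s ^ 2 * t * (-2) * (a2 ω * b0 ω) + (s ^ 3 * t * (-2) * (a2 ω * b1 ω) + (s ^ 3 * t * (-2) * (a3 ω * b0 ω) + (s ^ 4 * t * (-2) * (a3 ω * b1 ω) + (t ^ 2 * (b0 ω * b0 ω) + (s * t ^ 2 * 2 * (b0 ω * b1 ω) + (s ^ 2 * t ^ 2 * (b1 ω * b1 ω))))))))))))) μ := i9.add T10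
    have T8 : Integrable (fun ω => s ^ 5 * 2 * (a2 ω * a3 ω) + (s ^ 6 * (a3 ω * a3 ω) + (t * (-2) * (a0 ω * b0 ω) + (s * t * (-2) * (a0 ω * b1 ω) + (s * t * (-2) * (a1 ω * b0 ω) + (s ^ 2 * t * (-2) * (a1 ω * b1 ω) + (s ^ 2 * t * (-2) * (a2 ω * b0 ω) + (s ^ 3 * t * (-2) * (a2 ω * b1 ω) + (s ^ 3 * t * (-2) * (a3 ω * b0 ω) + (s ^ 4 * t * (-2) * (a3 ω * b1 ω) + (t ^ 2 * (b0 ω * b0 ω) + (s * t ^ 2 * 2 * (b0 ω * b1 ω) + (s ^ 2 * t ^ 2 * (b1 ω * b1 ω)))))))))))))) μ := i8.add T9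
    have T7 : Integrable (fun ω => s ^ 4 * (a2 ω * a2 ω) + (s ^ 5 * 2 * (a2 ω * a3 ω) + (s ^ 6 * (a3 ω * a3 ω) + (t * (-2) * (a0 ω * b0 ω) + (s * t * (-2) * (a0 ω * b1 ω) + (s * t * (-2) * (a1 ω * b0 ω) + (s ^ 2 * t * (-2) * (a1 ω * b1 ω) + (s ^ 2 * t * (-2) * (a2 ω * b0 ω) + (s ^ 3 * t * (-2) * (a2 ω * b1 ω) + (s ^ 3 * t * (-2) * (a3 ω * b0 ω) + (s ^ 4 * t * (-2) * (a3 ω * b1 ω) + (t ^ 2 * (b0 ω * b0 ω) + (s * t ^ 2 * 2 * (b0 ω * b1 ω) + (s ^ 2 * t ^ 2 * (b1 ω * b1 ω))))))))))))))) μ := i7.add T8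
    have T6 : Integrable (fun ω => s ^ 4 * 2 * (a1 ω * a3 ω) + (s ^ 4 * (a2 ω * a2 ω) + (s ^ 5 * 2 * (a2 ω * a3 ω) + (s ^ 6 * (a3 ω * a3 ω) + (t * (-2) * (a0 ω * b0 ω) + (s * t * (-2) * (a0 ω * b1 ω) + (s * t * (-2) * (a1 ω * b0 ω) + (s ^ 2 * t * (-2) * (a1 ω * b1 ω) + (s ^ 2 * t * (-2) * (a2 ω * b0 ω) + (s ^ 3 * t * (-2) * (a2 ω * b1 ω) + (s ^ 3 * t * (-2) * (a3 ω * b0 ω) + (s ^ 4 * t * (-2) * (a3 ω * b1 ω) + (t ^ 2 * (b0 ω * b0 ω) + (s * t ^ 2 * 2 * (b0 ω * b1 ω) + (s ^ 2 * t ^ 2 * (b1 ω * b1 ω)))))))))))))))) μ := i6.add T7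
    have T5 : Integrable (fun ω => s ^ 3 * 2 * (a1 ω * a2 ω) + (s ^ 4 * 2 * (a1 ω * a3 ω) + (s ^ 4 * (a2 ω * a2 ω) + (s ^ 5 * 2 * (a2 ω * a3 ω) + (s ^ 6 * (a3 ω * a3 ω) + (t * (-2) * (a0 ω * b0 ω) + (s * t * (-2) * (a0 ω * b1 ω) + (s * t * (-2) * (a1 ω * b0 ω) + (s ^ 2 * t * (-2) * (a1 ω * b1 ω) + (s ^ 2 * t * (-2) * (a2 ω * b0 ω) + (s ^ 3 * t * (-2) * (a2 ω * b1 ω) + (s ^ 3 * t * (-2) * (a3 ω * b0 ω) + (s ^ 4 * t * (-2) * (a3 ω * b1 ω) + (t ^ 2 * (b0 ω * b0 ω) + (s * t ^ 2 * 2 * (b0 ω * b1 ω) + (s ^ 2 * t ^ 2 * (b1 ω * b1 ω))))))))))))))))) μ := i5.add T6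
    have T4 : Integrable (fun ω => s ^ 2 * (a1 ω * a1 ω) + (s ^ 3 * 2 * (a1 ω * a2 ω) + (s ^ 4 * 2 * (a1 ω * a3 ω) + (s ^ 4 * (a2 ω * a2 ω) + (s ^ 5 * 2 * (a2 ω * a3 ω) + (s ^ 6 * (a3 ω * a3 ω) + (t * (-2) * (a0 ω * b0 ω) + (s * t * (-2) * (a0 ω * b1 ω) + (s * t * (-2) * (a1 ω * b0 ω) + (s ^ 2 * t * (-2) * (a1 ω * b1 ω) + (s ^ 2 * t * (-2) * (a2 ω * b0 ω) + (s ^ 3 * t * (-2) * (a2 ω * b1 ω) + (s ^ 3 * t * (-2) * (a3 ω * b0 ω) + (s ^ 4 * t * (-2) * (a3 ω * b1 ω) + (t ^ 2 * (b0 ω * b0 ω) + (s * t ^ 2 * 2 * (b0 ω * b1 ω) + (s ^ 2 * t ^ 2 * (b1 ω * b1 ω)))))))))))))))))) μ := i4.add T5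
    have T3 : Integrable (fun ω => s ^ 3 * 2 * (a0 ω * a3 ω) + (s ^ 2 * (a1 ω * a1 ω) + (s ^ 3 * 2 * (a1 ω * a2 ω) + (s ^ 4 * 2 * (a1 ω * a3 ω) + (s ^ 4 * (a2 ω * a2 ω) + (s ^ 5 * 2 * (a2 ω * a3 ω) + (s ^ 6 * (a3 ω * a3 ω) + (t * (-2) * (a0 ω * b0 ω) + (s * t * (-2) * (a0 ω * b1 ω) + (s * t * (-2) * (a1 ω * b0 ω) + (s ^ 2 * t * (-2) * (a1 ω * b1 ω) + (s ^ 2 * t * (-2) * (a2 ω * b0 ω) + (s ^ 3 * t * (-2) * (a2 ω * b1 ω) + (s ^ 3 * t * (-2) * (a3 ω * b0 ω) + (s ^ 4 * t * (-2) * (a3 ω * b1 ω) + (t ^ 2 * (b0 ω * b0 ω) + (s * t ^ 2 * 2 * (b0 ω * b1 ω) + (s ^ 2 * t ^ 2 * (b1 ω * b1 ω))))))))))))))))))) μ := i3.add T4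
    have T2 : Integrable (fun ω => s ^ 2 * 2 * (a0 ω * a2 ω) + (s ^ 3 * 2 * (a0 ω * a3 ω) + (s ^ 2 * (a1 ω * a1 ω) + (s ^ 3 * 2 * (a1 ω * a2 ω) + (s ^ 4 * 2 * (a1 ω * a3 ω) + (s ^ 4 * (a2 ω * a2 ω) + (s ^ 5 * 2 * (a2 ω * a3 ω) + (s ^ 6 * (a3 ω * a3 ω) + (t * (-2) * (a0 ω * b0 ω) + (s * t * (-2) * (a0 ω * b1 ω) + (s * t * (-2) * (a1 ω * b0 ω) + (s ^ 2 * t * (-2) * (a1 ω * b1 ω) + (s ^ 2 * t * (-2) * (a2 ω * b0 ω) + (s ^ 3 * t * (-2) * (a2 ω * b1 ω) + (s ^ 3 * t * (-2) * (a3 ω * b0 ω) + (s ^ 4 * t * (-2) * (a3 ω * b1 ω) + (t ^ 2 * (b0 ω * b0 ω) + (s * t ^ 2 * 2 * (b0 ω * b1 ω) + (s ^ 2 * t ^ 2 * (b1 ω * b1 ω)))))))))))))))))))) μ := i2.add T3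
    have T1 : Integrable (fun ω => s * 2 * (a0 ω * a1 ω) + (s ^ 2 * 2 * (a0 ω * a2 ω) + (s ^ 3 * 2 * (a0 ω * a3 ω) + (s ^ 2 * (a1 ω * a1 ω) + (s ^ 3 * 2 * (a1 ω * a2 ω) + (s ^ 4 * 2 * (a1 ω * a3 ω) + (s ^ 4 * (a2 ω * a2 ω) + (s ^ 5 * 2 * (a2 ω * a3 ω) + (s ^ 6 * (a3 ω * a3 ω) + (t * (-2) * (a0 ω * b0 ω) + (s * t * (-2) * (a0 ω * b1 ω) + (s * t * (-2) * (a1 ω * b0 ω) + (s ^ 2 * t * (-2) * (a1 ω * b1 ω) + (s ^ 2 * t * (-2) * (a2 ω * b0 ω) + (s ^ 3 * t * (-2) * (a2 ω * b1 ω) + (s ^ 3 * t * (-2) * (a3 ω * b0 ω) + (s ^ 4 * t * (-2) * (a3 ω * b1 ω) + (t ^ 2 * (b0 ω * b0 ω) + (s * t ^ 2 * 2 * (b0 ω * b1 ω) + (s ^ 2 * t ^ 2 * (b1 ω * b1 ω))))))))))))))))))))) μ := i1.add T2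
    have hre : (fun ω => (a0 ω + s * a1 ω + s ^ 2 * a2 ω + s ^ 3 * a3 ω - t * (b0 ω + s * b1 ω)) ^ 2) = fun ω => a0 ω * a0 ω + (s * 2 * (a0 ω * a1 ω) + (s ^ 2 * 2 * (a0 ω * a2 ω) + (s ^ 3 * 2 * (a0 ω * a3 ω) + (s ^ 2 * (a1 ω * a1 ω) + (s ^ 3 * 2 * (a1 ω * a2 ω) + (s ^ 4 * 2 * (a1 ω * a3 ω) + (s ^ 4 * (a2 ω * a2 ω) + (s ^ 5 * 2 * (a2 ω * a3 ω) + (s ^ 6 * (a3 ω * a3 ω) + (t * (-2) * (a0 ω * b0 ω) + (s * t * (-2) * (a0 ω * b1 ω) + (s * t * (-2) * (a1 ω * b0 ω) + (s ^ 2 * t * (-2) * (a1 ω * b1 ω) + (s ^ 2 * t * (-2) * (a2 ω * b0 ω) + (s ^ 3 * t * (-2) * (a2 ω * b1 ω) + (s ^ 3 * t * (-2) * (a3 ω * b0 ω) + (s ^ 4 * t * (-2) * (a3 ω * b1 ω) + (t ^ 2 * (b0 ω * b0 ω) + (s * t ^ 2 * 2 * (b0 ω * b1 ω) + (s ^ 2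 * t ^ 2 * (b1 ω * b1 ω))))))))))))))))))))) := by
      funext ω; ring
    rw [hre]
    rw [integral_add i0 T1, integral_add i1 T2, integral_add i2 T3, integral_add i3 T4, integral_add i4 T5, integral_add i5 T6, integral_add i6 T7, integral_add i7 T8, integral_add i8 T9, integral_add i9 T10, integral_add i10 T11, integral_add i11 T12, integral_add i12 T13, integral_add i13 T14, integral_add i14 T15, integral_add i15 T16, integral_add i16 T17, integral_add i17 T18, integral_add i18 T19, integral_add i19 T20]
    simp only [integral_const_mul]
    ring
  constructor
  · have hfun : (fun st : ℝ × ℝ => ∫ ω, (a0 ω + st.1 * a1 ω + st.1 ^ 2 * a2 ω + st.1 ^ 3 * a3 ω - st.2 * (b0 ω + st.1 * b1 ω)) ^ 2 ∂μ)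
        = fun st : ℝ × ℝ => ((∫ ω, a0 ω * a0 ω ∂μ) + (st.1 * (2 * (∫ ω, a0 ω * a1 ω ∂μ)) + (st.1 ^ 2 * (2 * (∫ ω, a0 ω * a2 ω ∂μ) + (∫ ω, a1 ω * a1 ω ∂μ)) + (st.1 ^ 3 * (2 * (∫ ω, a0 ω * a3 ω ∂μ) + 2 * (∫ ω, a1 ω * a2 ω ∂μ)) + (st.1 ^ 4 * (2 * (∫ ω, a1 ω * a3 ω ∂μ) + (∫ ω, a2 ω * a2 ω ∂μ)) + (st.1 ^ 5 * (2 * (∫ ω, a2 ω * a3 ω ∂μ)) + st.1 ^ 6 * (∫ ω, a3 ω * a3 ω ∂μ))))))) + (st.2 * ((-2) * (∫ ω, a0 ω * b0 ω ∂μ) + (st.1 * ((-2) * ((∫ ω, a0 ω * b1 ω ∂μ) + (∫ ω, a1 ω * b0 ω ∂μ))) + (st.1 ^ 2 * ((-2) * ((∫ ω, a1 ω * b1 ω ∂μ) + (∫ ω, a2 ω * b0 ω ∂μ))) + (st.1 ^ 3 * ((-2) * ((∫ ω, a2 ω * b1 ω ∂μ) + (∫ ω, a3 ω * b0 ω ∂μ)))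 + st.1 ^ 4 * ((-2) * (∫ ω, a3 ω * b1 ω ∂μ)))))) + st.2 ^ 2 * ((∫ ω, b0 ω * b0 ω ∂μ) + (st.1 * (2 * (∫ ω, b0 ω * b1 ω ∂μ)) + st.1 ^ 2 * (∫ ω, b1 ω * b1 ω ∂μ)))) := funext fun st => key st.1 st.2
    rw [hfun]
    fun_prop
  · have h1 : (fun s : ℝ => deriv (fun t : ℝ => ∫ ω, (a0 ω + s * a1 ω + s ^ 2 * a2 ω + s ^ 3 * a3 ω - t * (b0 ω + s * b1 ω)) ^ 2 ∂μ) 0)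
        = fun s : ℝ => ((-2) * (∫ ω, a0 ω * b0 ω ∂μ) + (s * ((-2) * ((∫ ω, a0 ω * b1 ω ∂μ) + (∫ ω, a1 ω * b0 ω ∂μ))) + (s ^ 2 * ((-2) * ((∫ ω, a1 ω * b1 ω ∂μ) + (∫ ω, a2 ω * b0 ω ∂μ))) + (s ^ 3 * ((-2) * ((∫ ω, a2 ω * b1 ω ∂μ) + (∫ ω, a3 ω * b0 ω ∂μ))) + s ^ 4 * ((-2) * (∫ ω, a3 ω * b1 ω ∂μ)))))) := by
      funext s
      have h2 : (fun t : ℝ => ∫ ω, (a0 ω + s * a1 ω + s ^ 2 * a2 ω + s ^ 3 * a3 ω - t * (b0 ω + s * b1 ω)) ^ 2 ∂μ)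
          = fun t : ℝ => ((∫ ω, a0 ω * a0 ω ∂μ) + (s * (2 * (∫ ω, a0 ω * a1 ω ∂μ)) + (s ^ 2 * (2 * (∫ ω, a0 ω * a2 ω ∂μ) + (∫ ω, a1 ω * a1 ω ∂μ)) + (s ^ 3 * (2 * (∫ ω, a0 ω * a3 ω ∂μ) + 2 * (∫ ω, a1 ω * a2 ω ∂μ)) + (s ^ 4 * (2 * (∫ ω, a1 ω * a3 ω ∂μ) + (∫ ω, a2 ω * a2 ω ∂μ)) + (s ^ 5 * (2 * (∫ ω, a2 ω * a3 ω ∂μ)) + s ^ 6 * (∫ ω, a3 ω * a3 ω ∂μ))))))) + (t * ((-2) * (∫ ω, a0 ω * b0 ω ∂μ) + (s * ((-2) * ((∫ ω, a0 ω * b1 ω ∂μ) + (∫ ω, a1 ω * b0 ω ∂μ))) + (s ^ 2 * ((-2) * ((∫ ω, a1 ω * b1 ω ∂μ) + (∫ ω, a2 ω * b0 ω ∂μ))) + (s ^ 3 * ((-2) * ((∫ ω, a2 ω * b1 ω ∂μ) + (∫ ω, a3 ω * b0 ω ∂μ))) + s ^ 4 * ((-2) * (∫ ω, a3 ω * b1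 ω ∂μ)))))) + t ^ 2 * ((∫ ω, b0 ω * b0 ω ∂μ) + (s * (2 * (∫ ω, b0 ω * b1 ω ∂μ)) + s ^ 2 * (∫ ω, b1 ω * b1 ω ∂μ)))) := funext fun t => key s t
      rw [h2, deriv_quad]
    rw [h1, deriv_quart]
    rw [← integral_add ((ma0.mul mb1).integrable) ((ma1.mul mb0).integrable), horth, mul_zero]

end Stmt14Aux

theorem stmt_14
    {Ω 𝓧 : Type*} [MeasurableSpace Ω] [MeasurableSpace 𝓧] [StandardBorelSpace 𝓧]
    (μ : Measure Ω) [IsProbabilityMeasure μ]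
    (Y T Z : Ω → ℝ) (X : Ω → 𝓧)
    (hY : Measurable Y) (hT : Measurable T) (hZ : Measurable Z) (hX : Measurable X)
    (hYbdd : ∃ C, ∀ ω, |Y ω| ≤ C) (hTbdd : ∃ C, ∀ ω, |T ω| ≤ C)
    (hZbdd : ∃ C, ∀ ω, |Z ω| ≤ C)
    (θ0 f0 : 𝓧 → ℝ) (hθ0m : Measurable θ0) (hf0m : Measurable f0)
    (hθ0bdd : ∃ C, ∀ x, |θ0 x| ≤ C) (hf0bdd : ∃ C, ∀ x, |f0 x| ≤ C)
    (hIV : μ[fun ω => Y ω - θ0 (X ω) * T ω - f0 (X ω) |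
        MeasurableSpace.comap (fun ω => (Z ω, X ω)) inferInstance] =ᵐ[μ] 0)
    (q0 p0 r0 : 𝓧 → ℝ) (hq0m : Measurable q0) (hp0m : Measurable p0) (hr0m : Measurable r0)
    (hq0bdd : ∃ C, ∀ x, |q0 x| ≤ C) (hp0bdd : ∃ C, ∀ x, |p0 x| ≤ C)
    (hr0bdd : ∃ C, ∀ x, |r0 x| ≤ C)
    (hq0 : (fun ω => q0 (X ω)) =ᵐ[μ] μ[Y | MeasurableSpace.comap X inferInstance])
    (hp0 : (fun ω => p0 (X ω)) =ᵐ[μ] μ[T | MeasurableSpace.comap X inferInstance])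
    (hr0 : (fun ω => r0 (X ω)) =ᵐ[μ] μ[Z | MeasurableSpace.comap X inferInstance])
    (h0 : ℝ × 𝓧 → ℝ) (hh0m : Measurable h0) (hh0bdd : ∃ C, ∀ zx, |h0 zx| ≤ C)
    (hh0 : (fun ω => h0 (Z ω, X ω)) =ᵐ[μ]
        μ[T | MeasurableSpace.comap (fun ω => (Z ω, X ω)) inferInstance])
    (β0 : 𝓧 → ℝ) (hβ0m : Measurable β0) (hβ0bdd : ∃ C, ∀ x, |β0 x| ≤ C)
    (hβ0 : (fun ω => β0 (X ω)) =ᵐ[μ]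
        μ[fun ω => (T ω - p0 (X ω)) * (Z ω - r0 (X ω)) | MeasurableSpace.comap X inferInstance])
    (V0 : 𝓧 → ℝ) (hV0m : Measurable V0) (hV0bdd : ∃ C, ∀ x, |V0 x| ≤ C)
    (hV0 : (fun ω => V0 (X ω)) =ᵐ[μ]
        μ[fun ω => (h0 (Z ω, X ω) - p0 (X ω)) ^ 2 | MeasurableSpace.comap X inferInstance])
    (μf νpre νp νq νV : 𝓧 → ℝ) (νh : ℝ × 𝓧 → ℝ)
    (hμfm : Measurable μf) (hνprem : Measurable νpre) (hνpm : Measurable νp)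
    (hνqm : Measurable νq) (hνVm : Measurable νV) (hνhm : Measurable νh)
    (hμfbdd : ∃ C, ∀ x, |μf x| ≤ C) (hνprebdd : ∃ C, ∀ x, |νpre x| ≤ C)
    (hνpbdd : ∃ C, ∀ x, |νp x| ≤ C) (hνqbdd : ∃ C, ∀ x, |νq x| ≤ C)
    (hνVbdd : ∃ C, ∀ x, |νV x| ≤ C) (hνhbdd : ∃ C, ∀ zx, |νh zx| ≤ C) :
    ContDiff ℝ (⊤ : ℕ∞) (fun st : ℝ × ℝ => ∫ ω, ((Y ω - (q0 (X ω) + st.1 * νq (X ω)))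
          * (h0 (Z ω, X ω) + st.1 * νh (Z ω, X ω) - (p0 (X ω) + st.1 * νp (X ω)))
        - (θ0 (X ω) + st.1 * νpre (X ω))
          * ((T ω - (p0 (X ω) + st.1 * νp (X ω)))
              * (h0 (Z ω, X ω) + st.1 * νh (Z ω, X ω) - (p0 (X ω) + st.1 * νp (X ω)))
              - (V0 (X ω) + st.1 * νV (X ω)))
        - (θ0 (X ω) + st.2 * μf (X ω)) * (V0 (X ω) + st.1 * νV (X ω))) ^ 2 ∂μ)
    ∧ deriv (fun s : ℝ => deriv (fun t : ℝ => ∫ ω, ((Y ω - (q0 (X ω) + s * νq (X ω)))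
          * (h0 (Z ω, X ω) + s * νh (Z ω, X ω) - (p0 (X ω) + s * νp (X ω)))
        - (θ0 (X ω) + s * νpre (X ω))
          * ((T ω - (p0 (X ω) + s * νp (X ω)))
              * (h0 (Z ω, X ω) + s * νh (Z ω, X ω) - (p0 (X ω) + s * νp (X ω)))
              - (V0 (X ω) + s * νV (X ω)))
        - (θ0 (X ω) + t * μf (X ω)) * (V0 (X ω) + s * νV (X ω))) ^ 2 ∂μ) 0) 0 = 0 := by
  classical
  -- basic sub-σ-algebra facts
  have hmZX : (MeasurableSpace.comap (fun ω => (Z ω, X ω)) inferInstance : MeasurableSpace Ω) ≤ ‹MeasurableSpace Ω› := (hZ.prodMk hX).comap_le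
  have hmX : (MeasurableSpace.comap X inferInstance : MeasurableSpace Ω) ≤ ‹MeasurableSpace Ω› := hX.comap_le
  have hXZ : (MeasurableSpace.comap X inferInstance : MeasurableSpace Ω) ≤ MeasurableSpace.comap (fun ω => (Z ω, X ω)) inferInstance := by
    have h1 : (MeasurableSpace.comap X inferInstance : MeasurableSpace Ω)
        = MeasurableSpace.comap (fun ω => (Z ω, X ω)) (MeasurableSpace.comap Prod.snd inferInstance) :=
      (MeasurableSpace.comap_comp (g := fun ω => (Z ω, X ω)) (f := (Prod.snd : ℝ × 𝓧 → 𝓧))).symm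
    rw [h1]
    exact MeasurableSpace.comap_mono measurable_snd.comap_le
  have hXm : Measurable[MeasurableSpace.comap X inferInstance] X := Measurable.of_comap_le le_rfl
  have hZXm : Measurable[MeasurableSpace.comap (fun ω => (Z ω, X ω)) inferInstance] (fun ω => (Z ω, X ω)) := Measurable.of_comap_le le_rfl
  -- bounded measurable atoms
  have bY : Stmt14Aux.MB Y := ⟨hY, hYbdd⟩
  have bT : Stmt14Aux.MB T := ⟨hT, hTbdd⟩
  have bq : Stmt14Aux.MB (fun ω => q0 (X ω)) := ⟨hq0m.comp hX, hq0bdd.imp fun C hC ω => hC (X ω)⟩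
  have bp : Stmt14Aux.MB (fun ω => p0 (X ω)) := ⟨hp0m.comp hX, hp0bdd.imp fun C hC ω => hC (X ω)⟩
  have bθ : Stmt14Aux.MB (fun ω => θ0 (X ω)) := ⟨hθ0m.comp hX, hθ0bdd.imp fun C hC ω => hC (X ω)⟩
  have bf0 : Stmt14Aux.MB (fun ω => f0 (X ω)) := ⟨hf0m.comp hX, hf0bdd.imp fun C hC ω => hC (X ω)⟩
  have bV : Stmt14Aux.MB (fun ω => V0 (X ω)) := ⟨hV0m.comp hX, hV0bdd.imp fun C hC ω => hC (X ω)⟩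
  have bμf : Stmt14Aux.MB (fun ω => μf (X ω)) := ⟨hμfm.comp hX, hμfbdd.imp fun C hC ω => hC (X ω)⟩
  have bνpre : Stmt14Aux.MB (fun ω => νpre (X ω)) := ⟨hνprem.comp hX, hνprebdd.imp fun C hC ω => hC (X ω)⟩
  have bνp : Stmt14Aux.MB (fun ω => νp (X ω)) := ⟨hνpm.comp hX, hνpbdd.imp fun C hC ω => hC (X ω)⟩
  have bνq : Stmt14Aux.MB (fun ω => νq (X ω)) := ⟨hνqm.comp hX, hνqbdd.imp fun C hC ω => hC (X ω)⟩
  have bνV : Stmt14Aux.MB (fun ω => νV (X ω)) := ⟨hνVm.comp hX, hνVbdd.imp fun C hC ω => hC (X ω)⟩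
  have bh : Stmt14Aux.MB (fun ω => h0 (Z ω, X ω)) :=
    ⟨hh0m.comp (hZ.prodMk hX), hh0bdd.imp fun C hC ω => hC (Z ω, X ω)⟩
  have bνh : Stmt14Aux.MB (fun ω => νh (Z ω, X ω)) :=
    ⟨hνhm.comp (hZ.prodMk hX), hνhbdd.imp fun C hC ω => hC (Z ω, X ω)⟩
  have bθT : Stmt14Aux.MB (fun ω => θ0 (X ω) * T ω) := bθ.mul bT
  have bR : Stmt14Aux.MB (fun ω => (Y ω - q0 (X ω) - θ0 (X ω) * (T ω - p0 (X ω)))) := (bY.sub bq).sub (bθ.mul (bT.sub bp))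
  have bH : Stmt14Aux.MB (fun ω => (h0 (Z ω, X ω) - p0 (X ω))) := bh.sub bp
  have bH2 : Stmt14Aux.MB (fun ω => (h0 (Z ω, X ω) - p0 (X ω)) ^ 2) := bH.sq
  have bd : Stmt14Aux.MB (fun ω => (νh (Z ω, X ω) - νp (X ω))) := bνh.sub bνp
  have bΦ : Stmt14Aux.MB (fun ω => (h0 (Z ω, X ω) - p0 (X ω)) * (μf (X ω) * νV (X ω)) + (νh (Z ω, X ω) - νp (X ω)) * (μf (X ω) * V0 (X ω))) := (bH.mul (bμf.mul bνV)).add (bd.mul (bμf.mul bV))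
  have bG1 : Stmt14Aux.MB (fun ω => μf (X ω) * V0 (X ω) * (θ0 (X ω) * νp (X ω) - νq (X ω))) := (bμf.mul bV).mul ((bθ.mul bνp).sub bνq)
  have bG2 : Stmt14Aux.MB (fun ω => νpre (X ω) * (μf (X ω) * V0 (X ω))) := bνpre.mul (bμf.mul bV)
  have bΨ : Stmt14Aux.MB (fun ω => (h0 (Z ω, X ω) - p0 (X ω)) * (νpre (X ω) * (μf (X ω) * V0 (X ω)))) := bH.mul bG2
  have bE0 : Stmt14Aux.MB (fun ω => (Y ω - q0 (X ω) - θ0 (X ω) * (T ω - p0 (X ω))) * (h0 (Z ω, X ω) - p0 (X ω))) := bR.mul bH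
  have bE1 : Stmt14Aux.MB (fun ω => (Y ω - q0 (X ω) - θ0 (X ω) * (T ω - p0 (X ω))) * (νh (Z ω, X ω) - νp (X ω)) + (h0 (Z ω, X ω) - p0 (X ω)) * (θ0 (X ω) * νp (X ω) - νq (X ω)) - νpre (X ω) * ((T ω - p0 (X ω)) * (h0 (Z ω, X ω) - p0 (X ω)) - V0 (X ω))) :=
    ((bR.mul bd).add (bH.mul ((bθ.mul bνp).sub bνq))).sub (bνpre.mul (((bT.sub bp).mul bH).sub bV))
  have bE2 : Stmt14Aux.MB (fun ω => -(νq (X ω) * (νh (Z ω, X ω) - νp (X ω))) - νpre (X ω) * ((T ω - p0 (X ω)) * (νh (Z ω, X ω) - νp (X ω)) - νp (X ω) * (h0 (Z ω, X ω) - p0 (X ω)) - νV (X ω)) + θ0 (X ω) * νp (X ω) * (νh (Z ω, X ω) - νp (X ω))) :=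
    (((bνq.mul bd).neg).sub (bνpre.mul ((((bT.sub bp).mul bd).sub (bνp.mul bH)).sub bνV))).add
      ((bθ.mul bνp).mul bd)
  have bE3 : Stmt14Aux.MB (fun ω => νpre (X ω) * νp (X ω) * (νh (Z ω, X ω) - νp (X ω))) := (bνpre.mul bνp).mul bd
  have bF0 : Stmt14Aux.MB (fun ω => μf (X ω) * V0 (X ω)) := bμf.mul bV
  have bF1 : Stmt14Aux.MB (fun ω => μf (X ω) * νV (X ω)) := bμf.mul bνV
  -- strong measurabilities with respect to the sub-σ-algebras
  have Φsm : StronglyMeasurable[MeasurableSpace.comap (fun ω => (Z ω, X ω)) inferInstance] (fun ω => (h0 (Z ω, X ω) - p0 (X ω)) * (μf (X ω) * νV (X ω)) + (νh (Z ω, X ω) - νp (X ω)) * (μf (X ω) * V0 (X ω))) :=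
    ((((hh0m.sub (hp0m.comp measurable_snd)).mul
        ((hμfm.comp measurable_snd).mul (hνVm.comp measurable_snd))).add
      ((hνhm.sub (hνpm.comp measurable_snd)).mul
        ((hμfm.comp measurable_snd).mul (hV0m.comp measurable_snd)))).comp hZXm).stronglyMeasurable
  have Ψsm : StronglyMeasurable[MeasurableSpace.comap (fun ω => (Z ω, X ω)) inferInstance] (fun ω => (h0 (Z ω, X ω) - p0 (X ω)) * (νpre (X ω) * (μf (X ω) * V0 (X ω)))) :=
    (((hh0m.sub (hp0m.comp measurable_snd)).mul
        ((hνprem.comp measurable_snd).mul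
          ((hμfm.comp measurable_snd).mul (hV0m.comp measurable_snd)))).comp hZXm).stronglyMeasurable
  have G1sm : StronglyMeasurable[MeasurableSpace.comap X inferInstance] (fun ω => μf (X ω) * V0 (X ω) * (θ0 (X ω) * νp (X ω) - νq (X ω))) :=
    ((((hμfm.mul hV0m).mul ((hθ0m.mul hνpm).sub hνqm)).comp hXm).stronglyMeasurable)
  have G2sm : StronglyMeasurable[MeasurableSpace.comap X inferInstance] (fun ω => νpre (X ω) * (μf (X ω) * V0 (X ω))) :=
    (((hνprem.mul (hμfm.mul hV0m)).comp hXm).stronglyMeasurable)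
  -- conditional expectation facts
  have c1 : μ[fun ω => Y ω - θ0 (X ω) * T ω - f0 (X ω)|MeasurableSpace.comap X inferInstance] =ᵐ[μ] 0 := by
    have t1 : μ[μ[fun ω => Y ω - θ0 (X ω) * T ω - f0 (X ω)|MeasurableSpace.comap (fun ω => (Z ω, X ω)) inferInstance]|MeasurableSpace.comap X inferInstance]
        =ᵐ[μ] μ[fun ω => Y ω - θ0 (X ω) * T ω - f0 (X ω)|MeasurableSpace.comap X inferInstance] :=
      condExp_condExp_of_le hXZ hmZX
    have t2 : μ[μ[fun ω => Y ω - θ0 (X ω) * T ω - f0 (X ω)|MeasurableSpace.comap (fun ω => (Z ω, X ω)) inferInstance]|MeasurableSpace.comap X inferInstance]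
        =ᵐ[μ] μ[(0 : Ω → ℝ)|MeasurableSpace.comap X inferInstance] := condExp_congr_ae hIV
    have t3 : μ[(0 : Ω → ℝ)|MeasurableSpace.comap X inferInstance] = 0 := condExp_zero
    refine t1.symm.trans (t2.trans ?_)
    rw [t3]
  have s1 : μ[fun ω => Y ω - θ0 (X ω) * T ω - f0 (X ω)|MeasurableSpace.comap X inferInstance]
      =ᵐ[μ] μ[fun ω => Y ω - θ0 (X ω) * T ω|MeasurableSpace.comap X inferInstance] - μ[fun ω => f0 (X ω)|MeasurableSpace.comap X inferInstance] :=
    condExp_sub (bY.sub bθT).integrable bf0.integrable _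
  have s2 : μ[fun ω => Y ω - θ0 (X ω) * T ω|MeasurableSpace.comap X inferInstance]
      =ᵐ[μ] μ[Y|MeasurableSpace.comap X inferInstance] - μ[fun ω => θ0 (X ω) * T ω|MeasurableSpace.comap X inferInstance] :=
    condExp_sub bY.integrable bθT.integrable _
  have s3 : μ[fun ω => θ0 (X ω) * T ω|MeasurableSpace.comap X inferInstance] =ᵐ[μ] (fun ω => θ0 (X ω)) * μ[T|MeasurableSpace.comap X inferInstance] :=
    condExp_mul_of_stronglyMeasurable_left ((hθ0m.comp hXm).stronglyMeasurable) bθT.integrable bT.integrable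
  have s4 : μ[fun ω => f0 (X ω)|MeasurableSpace.comap X inferInstance] = fun ω => f0 (X ω) :=
    condExp_of_stronglyMeasurable hmX ((hf0m.comp hXm).stronglyMeasurable) bf0.integrable
  have key0 : (fun ω => q0 (X ω) - θ0 (X ω) * p0 (X ω) - f0 (X ω)) =ᵐ[μ] 0 := by
    filter_upwards [c1, s1, s2, s3, hq0, hp0] with ω h1 h2 h3 h4 hq hp
    simp only [Pi.sub_apply, Pi.mul_apply, Pi.zero_apply] at h1 h2 h3 h4 ⊢
    have h5 : (μ[fun ω => f0 (X ω)|MeasurableSpace.comap X inferInstance]) ω = f0 (X ω) := by rw [s4]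
    rw [hq, hp]
    rw [h5] at h2
    linarith [h1, h2, h3, h4]
  have hRW : (fun ω => (Y ω - q0 (X ω) - θ0 (X ω) * (T ω - p0 (X ω)))) =ᵐ[μ] fun ω => Y ω - θ0 (X ω) * T ω - f0 (X ω) := by
    filter_upwards [key0] with ω h
    simp only [Pi.zero_apply] at h
    have hqv : q0 (X ω) = θ0 (X ω) * p0 (X ω) + f0 (X ω) := by linarith
    rw [hqv]; ring
  have hcondR : μ[fun ω => (Y ω - q0 (X ω) - θ0 (X ω) * (T ω - p0 (X ω)))|MeasurableSpace.comap (fun ω => (Z ω, X ω)) inferInstance] =ᵐ[μ] 0 := (condExp_congr_ae hRW).trans hIV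
  have u1 : μ[fun ω => h0 (Z ω, X ω)|MeasurableSpace.comap X inferInstance] =ᵐ[μ] μ[T|MeasurableSpace.comap X inferInstance] :=
    (condExp_congr_ae hh0).trans (condExp_condExp_of_le hXZ hmZX)
  have u2 : μ[fun ω => p0 (X ω)|MeasurableSpace.comap X inferInstance] = fun ω => p0 (X ω) :=
    condExp_of_stronglyMeasurable hmX ((hp0m.comp hXm).stronglyMeasurable) bp.integrable
  have u3 : μ[fun ω => (h0 (Z ω, X ω) - p0 (X ω))|MeasurableSpace.comap X inferInstance]
      =ᵐ[μ] μ[fun ω => h0 (Z ω, X ω)|MeasurableSpace.comap X inferInstance] - μ[fun ω => p0 (X ω)|MeasurableSpace.comap X inferInstance] :=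
    condExp_sub bh.integrable bp.integrable _
  have hcondH : μ[fun ω => (h0 (Z ω, X ω) - p0 (X ω))|MeasurableSpace.comap X inferInstance] =ᵐ[μ] 0 := by
    filter_upwards [u1, u3, hp0] with ω h1 h3 hp
    simp only [Pi.sub_apply, Pi.zero_apply] at h3 ⊢
    have h2 : (μ[fun ω => p0 (X ω)|MeasurableSpace.comap X inferInstance]) ω = p0 (X ω) := by rw [u2]
    rw [h3]
    linarith [h1, h2, hp]
  -- the orthogonality integral identities
  have z1 : ∫ ω, (Y ω - q0 (X ω) - θ0 (X ω) * (T ω - p0 (X ω))) * ((h0 (Z ω, X ω) - p0 (X ω)) * (μf (X ω) * νV (X ω)) + (νh (Z ω, X ω) - νp (X ω)) * (μf (X ω) * V0 (X ω))) ∂μ = 0 :=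
    Stmt14Aux.int_mul_zero hmZX bR.integrable (bΦ.mul bR).integrable hcondR Φsm
  have z2 : ∫ ω, (h0 (Z ω, X ω) - p0 (X ω)) * (μf (X ω) * V0 (X ω) * (θ0 (X ω) * νp (X ω) - νq (X ω))) ∂μ = 0 :=
    Stmt14Aux.int_mul_zero hmX bH.integrable (bG1.mul bH).integrable hcondH G1sm
  have z3 : ∫ ω, T ω * ((h0 (Z ω, X ω) - p0 (X ω)) * (νpre (X ω) * (μf (X ω) * V0 (X ω)))) ∂μ = ∫ ω, h0 (Z ω, X ω) * ((h0 (Z ω, X ω) - p0 (X ω)) * (νpre (X ω) * (μf (X ω) * V0 (X ω)))) ∂μ :=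
    Stmt14Aux.int_mul_congr hmZX bT.integrable (bΨ.mul bT).integrable hh0.symm Ψsm
  have z4 : ∫ ω, (h0 (Z ω, X ω) - p0 (X ω)) ^ 2 * (νpre (X ω) * (μf (X ω) * V0 (X ω))) ∂μ = ∫ ω, V0 (X ω) * (νpre (X ω) * (μf (X ω) * V0 (X ω))) ∂μ :=
    Stmt14Aux.int_mul_congr hmX bH2.integrable (bG2.mul bH2).integrable hV0.symm G2sm
  have i_hΨ : Integrable (fun ω => h0 (Z ω, X ω) * ((h0 (Z ω, X ω) - p0 (X ω)) * (νpre (X ω) * (μf (X ω) * V0 (X ω))))) μ := (bh.mul bΨ).integrable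
  have i_pΨ : Integrable (fun ω => p0 (X ω) * ((h0 (Z ω, X ω) - p0 (X ω)) * (νpre (X ω) * (μf (X ω) * V0 (X ω))))) μ := (bp.mul bΨ).integrable
  have i_TΨ : Integrable (fun ω => T ω * ((h0 (Z ω, X ω) - p0 (X ω)) * (νpre (X ω) * (μf (X ω) * V0 (X ω))))) μ := (bT.mul bΨ).integrable
  have i_VG2 : Integrable (fun ω => V0 (X ω) * (νpre (X ω) * (μf (X ω) * V0 (X ω)))) μ := (bV.mul bG2).integrable
  have i_RΦ : Integrable (fun ω => (Y ω - q0 (X ω) - θ0 (X ω) * (T ω - p0 (X ω))) * ((h0 (Z ω, X ω) - p0 (X ω)) * (μf (X ω) * νV (X ω)) + (νh (Z ω, X ω) - νp (X ω)) * (μf (X ω) * V0 (X ω)))) μ := (bR.mul bΦ).integrable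
  have i_HG1 : Integrable (fun ω => (h0 (Z ω, X ω) - p0 (X ω)) * (μf (X ω) * V0 (X ω) * (θ0 (X ω) * νp (X ω) - νq (X ω)))) μ := (bH.mul bG1).integrable
  have i_sub : Integrable (fun ω => p0 (X ω) * ((h0 (Z ω, X ω) - p0 (X ω)) * (νpre (X ω) * (μf (X ω) * V0 (X ω)))) - T ω * ((h0 (Z ω, X ω) - p0 (X ω)) * (νpre (X ω) * (μf (X ω) * V0 (X ω))))) μ := i_pΨ.sub i_TΨ
  have z5 : (∫ ω, h0 (Z ω, X ω) * ((h0 (Z ω, X ω) - p0 (X ω)) * (νpre (X ω) * (μf (X ω) * V0 (X ω)))) ∂μ) - (∫ ω, p0 (X ω) * ((h0 (Z ω, X ω) - p0 (X ω)) * (νpre (X ω) * (μf (X ω) * V0 (X ω)))) ∂μ)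
      = ∫ ω, (h0 (Z ω, X ω) - p0 (X ω)) ^ 2 * (νpre (X ω) * (μf (X ω) * V0 (X ω))) ∂μ := by
    rw [← integral_sub i_hΨ i_pΨ]
    exact integral_congr_ae (ae_of_all _ fun ω => by ring)
  have i_rest2 : Integrable (fun ω => (p0 (X ω) * ((h0 (Z ω, X ω) - p0 (X ω)) * (νpre (X ω) * (μf (X ω) * V0 (X ω)))) - T ω * ((h0 (Z ω, X ω) - p0 (X ω)) * (νpre (X ω) * (μf (X ω) * V0 (X ω))))) + V0 (X ω) * (νpre (X ω) * (μf (X ω) * V0 (X ω)))) μ :=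
    i_sub.add i_VG2
  have i_rest1 : Integrable (fun ω => (h0 (Z ω, X ω) - p0 (X ω)) * (μf (X ω) * V0 (X ω) * (θ0 (X ω) * νp (X ω) - νq (X ω))) + ((p0 (X ω) * ((h0 (Z ω, X ω) - p0 (X ω)) * (νpre (X ω) * (μf (X ω) * V0 (X ω)))) - T ω * ((h0 (Z ω, X ω) - p0 (X ω)) * (νpre (X ω) * (μf (X ω) * V0 (X ω))))) + V0 (X ω) * (νpre (X ω) * (μf (X ω) * V0 (X ω))))) μ :=
    i_HG1.add i_rest2
  have horth : ∫ ω, ((Y ω - q0 (X ω) - θ0 (X ω) * (T ω - p0 (X ω))) * (h0 (Z ω, X ω) - p0 (X ω))) * (μf (X ω) * νV (X ω)) + ((Y ω - q0 (X ω) - θ0 (X ω) * (T ω - p0 (X ω))) * (νh (Z ω, X ω) - νp (X ω)) + (h0 (Z ω, X ω) - p0 (X ω)) * (θ0 (X ω) * νp (X ω) - νq (X ω)) - νpre (X ω) * ((T ω - p0 (X ω)) * (h0 (Z ω, X ω) - p0 (X ω)) - V0 (X ω))) * (μf (X ω) * V0 (X ω)) ∂μ = 0 := by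
    have hsplit : ∫ ω, ((Y ω - q0 (X ω) - θ0 (X ω) * (T ω - p0 (X ω))) * (h0 (Z ω, X ω) - p0 (X ω))) * (μf (X ω) * νV (X ω)) + ((Y ω - q0 (X ω) - θ0 (X ω) * (T ω - p0 (X ω))) * (νh (Z ω, X ω) - νp (X ω)) + (h0 (Z ω, X ω) - p0 (X ω)) * (θ0 (X ω) * νp (X ω) - νq (X ω)) - νpre (X ω) * ((T ω - p0 (X ω)) * (h0 (Z ω, X ω) - p0 (X ω)) - V0 (X ω))) * (μf (X ω) * V0 (X ω)) ∂μ
        = ∫ ω, (Y ω - q0 (X ω) - θ0 (X ω) * (T ω - p0 (X ω))) * ((h0 (Z ω, X ω) - p0 (X ω)) * (μf (X ω) * νV (X ω)) + (νh (Z ω, X ω) - νp (X ω)) * (μf (X ω) * V0 (X ω))) + ((h0 (Z ω, X ω) - p0 (X ω)) * (μf (X ω) * V0 (X ω) * (θ0 (X ω) * νp (X ω) - νq (X ω))) + ((p0 (X ω) * ((h0 (Z ω, X ω) - p0 (X ω)) * (νpre (X ω) * (μf (X ω) * V0 (X ω)))) - T ω * ((h0 (Z ω, X ω) - p0 (X ω))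 * (νpre (X ω) * (μf (X ω) * V0 (X ω))))) + V0 (X ω) * (νpre (X ω) * (μf (X ω) * V0 (X ω))))) ∂μ :=
      integral_congr_ae (ae_of_all _ fun ω => by ring)
    rw [hsplit, integral_add i_RΦ i_rest1, integral_add i_HG1 i_rest2, integral_add i_sub i_VG2,
      integral_sub i_pΨ i_TΨ, z1, z2, z3]
    linarith [z4, z5]
  have main := Stmt14Aux.aux μ (fun ω => (Y ω - q0 (X ω) - θ0 (X ω) * (T ω - p0 (X ω))) * (h0 (Z ω, X ω) - p0 (X ω))) (fun ω => (Y ω - q0 (X ω) - θ0 (X ω) * (T ω - p0 (X ω))) * (νh (Z ω, X ω) - νp (X ω)) + (h0 (Z ω, X ω) - p0 (X ω)) * (θ0 (X ω) * νp (X ω) - νq (X ω)) - νpre (X ω) * ((T ω - p0 (X ω)) * (h0 (Z ω, X ω) - p0 (X ω)) - V0 (X ω))) (fun ω => -(νq (X ω) * (νh (Z ω, X ω) - νp (X ω))) - νpre (X ω) * ((T ω - p0 (X ω)) * (νh (Z ω, X ω) - νp (X ω)) - νp (X ω) * (h0 (Z ω, X ω) - p0 (X ω)) - νV (X ω)) +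 θ0 (X ω) * νp (X ω) * (νh (Z ω, X ω) - νp (X ω)))
    (fun ω => νpre (X ω) * νp (X ω) * (νh (Z ω, X ω) - νp (X ω))) (fun ω => μf (X ω) * V0 (X ω)) (fun ω => μf (X ω) * νV (X ω)) bE0 bE1 bE2 bE3 bF0 bF1 horth
  have hmatch : ∀ (s t : ℝ) (ω : Ω),
      ((Y ω - (q0 (X ω) + s * νq (X ω)))
          * (h0 (Z ω, X ω) + s * νh (Z ω, X ω) - (p0 (X ω) + s * νp (X ω)))
        - (θ0 (X ω) + s * νpre (X ω))
          * ((T ω - (p0 (X ω) + s * νp (X ω)))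
              * (h0 (Z ω, X ω) + s * νh (Z ω, X ω) - (p0 (X ω) + s * νp (X ω)))
              - (V0 (X ω) + s * νV (X ω)))
        - (θ0 (X ω) + t * μf (X ω)) * (V0 (X ω) + s * νV (X ω))) ^ 2
      = (((Y ω - q0 (X ω) - θ0 (X ω) * (T ω - p0 (X ω))) * (h0 (Z ω, X ω) - p0 (X ω))) + s * ((Y ω - q0 (X ω) - θ0 (X ω) * (T ω - p0 (X ω))) * (νh (Z ω, X ω) - νp (X ω)) + (h0 (Z ω, X ω) - p0 (X ω)) * (θ0 (X ω) * νp (X ω) - νq (X ω)) - νpre (X ω) * ((T ω - p0 (X ω)) * (h0 (Z ω, X ω) - p0 (X ω)) - V0 (X ω))) + s ^ 2 * (-(νq (X ω) * (νh (Z ω, X ω) - νp (X ω))) - νpre (X ω) * ((T ω - p0 (X ω)) * (νh (Z ω, X ω) - νp (X ω)) - νp (X ω) * (h0 (Z ω, X ω) - p0 (X ω)) - νV (X ω)) + θ0 (X ω) * νp (X ω) * (νh (Z ω, X ω) - νp (X ω))) + s ^ 3 * (νpre (X ω) * νp (X ω) * (νh (Z ω, X ω) - νp (X ω))) - t * ((μf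 (X ω) * V0 (X ω)) + s * (μf (X ω) * νV (X ω)))) ^ 2 := by
    intro s t ω
    ring
  constructor
  · have e1 : (fun st : ℝ × ℝ => ∫ ω, ((Y ω - (q0 (X ω) + st.1 * νq (X ω)))
          * (h0 (Z ω, X ω) + st.1 * νh (Z ω, X ω) - (p0 (X ω) + st.1 * νp (X ω)))
        - (θ0 (X ω) + st.1 * νpre (X ω))
          * ((T ω - (p0 (X ω) + st.1 * νp (X ω)))
              * (h0 (Z ω, X ω) + st.1 * νh (Z ω, X ω) - (p0 (X ω) + st.1 * νp (X ω)))
              - (V0 (X ω) + st.1 * νV (X ω)))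
        - (θ0 (X ω) + st.2 * μf (X ω)) * (V0 (X ω) + st.1 * νV (X ω))) ^ 2 ∂μ)
        = fun st : ℝ × ℝ => ∫ ω, (((Y ω - q0 (X ω) - θ0 (X ω) * (T ω - p0 (X ω))) * (h0 (Z ω, X ω) - p0 (X ω))) + st.1 * ((Y ω - q0 (X ω) - θ0 (X ω) * (T ω - p0 (X ω))) * (νh (Z ω, X ω) - νp (X ω)) + (h0 (Z ω, X ω) - p0 (X ω)) * (θ0 (X ω) * νp (X ω) - νq (X ω)) - νpre (X ω) * ((T ω - p0 (X ω)) * (h0 (Z ω, X ω) - p0 (X ω)) - V0 (X ω))) + st.1 ^ 2 * (-(νq (X ω) * (νh (Z ω, X ω) - νp (X ω))) - νpre (X ω) * ((T ω - p0 (X ω)) * (νh (Z ω, X ω) - νp (X ω)) - νp (X ω) * (h0 (Z ω, X ω) - p0 (X ω)) - νV (X ω)) + θ0 (X ω) * νp (X ω) * (νh (Z ω, X ω) - νp (X ω))) + st.1 ^ 3 * (νpre (X ω) * νp (X ω) * (νh (Z ω, X ω) - νp (X ω))) - st.2 * ((μf (X ω) * V0 (X ω)) + st.1 * (μf (X ω)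 * νV (X ω)))) ^ 2 ∂μ := by
      funext st
      exact integral_congr_ae (ae_of_all _ fun ω => hmatch st.1 st.2 ω)
    rw [e1]
    exact main.1
  · have e2 : (fun s : ℝ => deriv (fun t : ℝ => ∫ ω, ((Y ω - (q0 (X ω) + s * νq (X ω)))
          * (h0 (Z ω, X ω) + s * νh (Z ω, X ω) - (p0 (X ω) + s * νp (X ω)))
        - (θ0 (X ω) + s * νpre (X ω))
          * ((T ω - (p0 (X ω) + s * νp (X ω)))
              * (h0 (Z ω, X ω) + s * νh (Z ω, X ω) - (p0 (X ω) + s * νp (X ω)))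
              - (V0 (X ω) + s * νV (X ω)))
        - (θ0 (X ω) + t * μf (X ω)) * (V0 (X ω) + s * νV (X ω))) ^ 2 ∂μ) 0)
        = fun s : ℝ => deriv (fun t : ℝ => ∫ ω, (((Y ω - q0 (X ω) - θ0 (X ω) * (T ω - p0 (X ω))) * (h0 (Z ω, X ω) - p0 (X ω))) + s * ((Y ω - q0 (X ω) - θ0 (X ω) * (T ω - p0 (X ω))) * (νh (Z ω, X ω) - νp (X ω)) + (h0 (Z ω, X ω) - p0 (X ω)) * (θ0 (X ω) * νp (X ω) - νq (X ω)) - νpre (X ω) * ((T ω - p0 (X ω)) * (h0 (Z ω, X ω) - p0 (X ω)) - V0 (X ω))) + s ^ 2 * (-(νq (X ω) * (νh (Z ω, X ω) - νp (X ω))) - νpre (X ω) * ((T ω - p0 (X ω)) * (νh (Z ω, X ω) - νp (X ω)) - νp (X ω) * (h0 (Z ω, X ω) - p0 (X ω)) - νV (X ω)) + θ0 (X ω) * νp (X ω) * (νh (Z ω, X ω) - νp (X ω))) + s ^ 3 * (νpre (X ω) * νp (X ω) * (νh (Z ω, X ω) - νp (X ω))) - t * ((μf (X ω) * V0 (X ω))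 + s * (μf (X ω) * νV (X ω)))) ^ 2 ∂μ) 0 := by
      funext s
      congr 1
      funext t
      exact integral_congr_ae (ae_of_all _ fun ω => hmatch s t ω)
    rw [e2]
    exact main.2
end

section
/- (In randomized trials with non-compliance, the DMLIV loss coincides with the re-weighted DRIV loss at zero preliminary effect.) Under the binary intent-to-treat setup, for every bounded measurable function θ of X, E[( (Y − q0(X))·(Z − 1/2) − θ(X)·β0(X) )²] = (1/4)·E[( Y − q0(X) − θ(X)·(h0(Z,X) − p0(X)) )²]; i.e., the re-weighted DRIV loss with preliminary effect θ_pre = 0 equals one quarter of the DMLIV loss L¹(θ; q0, h0, p0). -/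
open MeasureTheory Filter

/-!
Since `Z` is binary, `h₀(Z, X) = h₀(0, X) + (h₀(1, X) - h₀(0, X)) Z`, so averaging over `Z` with
`P(Z = 1 | X) = 1/2` gives `p₀ = (h₀(0, ·) + h₀(1, ·)) / 2`. Hence
`(Z - 1/2)(h₀(Z, X) - p₀(X)) = (h₀(1, X) - h₀(0, X)) / 4` is already a function of `X`, and the tower
property applied to `β₀(X) = E[(Z - 1/2) E[T - p₀(X) | Z, X] | X]` shows that `β₀(X)` equals it.
Substituting, the DRIV residual is `(Z - 1/2)` times the DMLIV residual, and `(Z - 1/2)² = 1/4`.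
-/

lemma eq_add_sub_mul_of_binary {z : ℝ} (hz : z = 0 ∨ z = 1) (g : ℝ → ℝ) :
    g z = g 0 + (g 1 - g 0) * z := by
  rcases hz with rfl | rfl <;> ring

lemma sub_half_mul_sub_midpoint_of_binary {z : ℝ} (hz : z = 0 ∨ z = 1) (g : ℝ → ℝ) :
    (z - 1 / 2) * (g z - (g 0 + g 1) / 2) = (g 1 - g 0) / 4 := by
  rcases hz with rfl | rfl <;> ring

lemma sub_half_sq_of_binary {z : ℝ} (hz : z = 0 ∨ z = 1) : (z - 1 / 2) ^ 2 = 1 / 4 := by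
  rcases hz with rfl | rfl <;> norm_num

lemma abs_sub_half_le_of_binary {z : ℝ} (hz : z = 0 ∨ z = 1) : |z - 1 / 2| ≤ 1 := by
  rcases hz with rfl | rfl <;> norm_num [abs_le]

lemma sub_half_mul_sub_ae_eq_quarter_sub {Ω 𝓧 : Type*} {mΩ : MeasurableSpace Ω} {μ : Measure Ω}
    {Z : Ω → ℝ} {X : Ω → 𝓧} {p : 𝓧 → ℝ} {h : ℝ × 𝓧 → ℝ} (hZ01 : ∀ ω, Z ω = 0 ∨ Z ω = 1)
    (hp : (fun ω => p (X ω)) =ᵐ[μ] fun ω => (h (0, X ω) + h (1, X ω)) / 2) :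
    (fun ω => (Z ω - 1 / 2) * (h (Z ω, X ω) - p (X ω))) =ᵐ[μ]
      fun ω => (h (1, X ω) - h (0, X ω)) / 4 := by
  filter_upwards [hp] with ω hω
  rw [hω]
  exact sub_half_mul_sub_midpoint_of_binary (hZ01 ω) fun z => h (z, X ω)

section CondExp

variable {Ω 𝓩 𝓧 : Type*} {mΩ : MeasurableSpace Ω} [MeasurableSpace 𝓩] [MeasurableSpace 𝓧]
  {μ : Measure Ω}

lemma comap_le_comap_prodMk (Z : Ω → 𝓩) (X : Ω → 𝓧) :
    MeasurableSpace.comap X inferInstance ≤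
      MeasurableSpace.comap (fun ω => (Z ω, X ω)) inferInstance :=
  (measurable_snd.comp (comap_measurable (fun ω => (Z ω, X ω)))).comap_le

lemma integrable_comp_of_abs_le [IsFiniteMeasure μ] {X : Ω → 𝓧} (hX : Measurable X)
    {g : 𝓧 → ℝ} (hg : Measurable g) {C : ℝ} (hC : ∀ x, |g x| ≤ C) :
    Integrable (fun ω => g (X ω)) μ :=
  .of_bound (hg.comp hX).aestronglyMeasurable C (ae_of_all _ fun _ => hC _)

lemma condExp_comp_of_abs_le [IsFiniteMeasure μ] {X : Ω → 𝓧} (hX : Measurable X)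
    {g : 𝓧 → ℝ} (hg : Measurable g) {C : ℝ} (hC : ∀ x, |g x| ≤ C) :
    μ[fun ω => g (X ω) | MeasurableSpace.comap X inferInstance] = fun ω => g (X ω) :=
  condExp_of_stronglyMeasurable hX.comap_le (hg.comp (comap_measurable X)).stronglyMeasurable
    (integrable_comp_of_abs_le hX hg hC)

lemma condExp_sub_ae_eq_of_stronglyMeasurable {m : MeasurableSpace Ω} (hm : m ≤ mΩ)
    [SigmaFinite (μ.trim hm)] {f g : Ω → ℝ} (hf : Integrable f μ) (hg : StronglyMeasurable[m] g)
    (hg_int : Integrable g μ) :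
    μ[f - g | m] =ᵐ[μ] μ[f | m] - g := by
  simpa only [condExp_of_stronglyMeasurable hm hg hg_int] using condExp_sub hf hg_int m

lemma condExp_mul_ae_eq_condExp_mul_condExp {m₁ m₂ : MeasurableSpace Ω} (hm₁₂ : m₁ ≤ m₂)
    (hm₂ : m₂ ≤ mΩ) [SigmaFinite (μ.trim hm₂)] {f g : Ω → ℝ} (hf : StronglyMeasurable[m₂] f)
    (hfg : Integrable (f * g) μ) (hg : Integrable g μ) :
    μ[f * g | m₁] =ᵐ[μ] μ[f * μ[g | m₂] | m₁] :=
  (condExp_condExp_of_le hm₁₂ hm₂).symm.trans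
    (condExp_congr_ae (condExp_mul_of_stronglyMeasurable_left hf hfg hg))

lemma condExp_comp_prodMk_of_binary [IsFiniteMeasure μ] {Z : Ω → ℝ} {X : Ω → 𝓧}
    (hZ : Measurable Z) (hX : Measurable X) (hZ01 : ∀ ω, Z ω = 0 ∨ Z ω = 1) {g : ℝ × 𝓧 → ℝ}
    (hg : Measurable g) {C : ℝ} (hC : ∀ zx, |g zx| ≤ C) :
    μ[fun ω => g (Z ω, X ω) | MeasurableSpace.comap X inferInstance] =ᵐ[μ]
      fun ω => g (0, X ω) +
        (g (1, X ω) - g (0, X ω)) * μ[Z | MeasurableSpace.comap X inferInstance] ω := by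
  set Δ : Ω → ℝ := fun ω => g (1, X ω) - g (0, X ω)
  have hg_meas (z : ℝ) : Measurable fun x => g (z, x) := by fun_prop
  have hΔ : StronglyMeasurable[MeasurableSpace.comap X inferInstance] Δ :=
    (((hg_meas 1).sub (hg_meas 0)).comp (comap_measurable X)).stronglyMeasurable
  have hZ_int : Integrable Z μ := .of_bound hZ.aestronglyMeasurable 1
    (ae_of_all _ fun ω => by rcases hZ01 ω with h | h <;> simp [h])
  have hΔZ_int : Integrable (Δ * Z) μ :=
    hZ_int.bdd_mul ((hΔ.mono hX.comap_le).aestronglyMeasurable)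
      (ae_of_all _ fun ω => (abs_sub _ _).trans (add_le_add (hC _) (hC _)))
  have hsplit : (fun ω => g (Z ω, X ω)) = (fun ω => g (0, X ω)) + Δ * Z :=
    funext fun ω => eq_add_sub_mul_of_binary (hZ01 ω) fun z => g (z, X ω)
  rw [hsplit]
  filter_upwards [condExp_add (integrable_comp_of_abs_le hX (hg_meas 0) fun _ => hC _) hΔZ_int _,
    condExp_mul_of_stronglyMeasurable_left hΔ hΔZ_int hZ_int] with ω hadd hmul
  rw [hadd, Pi.add_apply, hmul, condExp_comp_of_abs_le hX (hg_meas 0) fun _ => hC _]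
  rfl

end CondExp

section BinaryInstrument

variable {Ω 𝓧 : Type*} {mΩ : MeasurableSpace Ω} [MeasurableSpace 𝓧] {μ : Measure Ω}
  [IsFiniteMeasure μ] {T Z : Ω → ℝ} {X : Ω → 𝓧} {p : 𝓧 → ℝ} {h : ℝ × 𝓧 → ℝ}

lemma ae_eq_midpoint_of_condExp_half (hZ : Measurable Z) (hX : Measurable X)
    (hZ01 : ∀ ω, Z ω = 0 ∨ Z ω = 1)
    (hZhalf : μ[Z | MeasurableSpace.comap X inferInstance] =ᵐ[μ] fun _ => (1 / 2 : ℝ))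
    (hh : Measurable h) {C : ℝ} (hC : ∀ zx, |h zx| ≤ C)
    (hp : (fun ω => p (X ω)) =ᵐ[μ] μ[T | MeasurableSpace.comap X inferInstance])
    (hhT : (fun ω => h (Z ω, X ω)) =ᵐ[μ]
        μ[T | MeasurableSpace.comap (fun ω => (Z ω, X ω)) inferInstance]) :
    (fun ω => p (X ω)) =ᵐ[μ] fun ω => (h (0, X ω) + h (1, X ω)) / 2 :=
  calc (fun ω => p (X ω))
      =ᵐ[μ] μ[T | MeasurableSpace.comap X inferInstance] := hp
    _ =ᵐ[μ] μ[μ[T | MeasurableSpace.comap (fun ω => (Z ω, X ω)) inferInstance] |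
          MeasurableSpace.comap X inferInstance] :=
      (condExp_condExp_of_le (comap_le_comap_prodMk Z X) (hZ.prodMk hX).comap_le).symm
    _ =ᵐ[μ] μ[fun ω => h (Z ω, X ω) | MeasurableSpace.comap X inferInstance] :=
      condExp_congr_ae hhT.symm
    _ =ᵐ[μ] fun ω => (h (0, X ω) + h (1, X ω)) / 2 := by
      filter_upwards [condExp_comp_prodMk_of_binary hZ hX hZ01 hh hC, hZhalf] with ω hω hω'
      rw [hω, hω']
      ring

lemma ae_eq_condExp_sub_half_mul_sub {β r : 𝓧 → ℝ} (hT : Integrable T μ)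
    (hZ : Measurable Z) (hX : Measurable X) (hZ01 : ∀ ω, Z ω = 0 ∨ Z ω = 1)
    (hp_meas : Measurable p) (hp_int : Integrable (fun ω => p (X ω)) μ)
    (hhT : (fun ω => h (Z ω, X ω)) =ᵐ[μ]
        μ[T | MeasurableSpace.comap (fun ω => (Z ω, X ω)) inferInstance])
    (hr : (fun ω => r (X ω)) =ᵐ[μ] fun _ => (1 / 2 : ℝ))
    (hβ : (fun ω => β (X ω)) =ᵐ[μ]
        μ[fun ω => (T ω - p (X ω)) * (Z ω - r (X ω)) | MeasurableSpace.comap X inferInstance]) :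
    (fun ω => β (X ω)) =ᵐ[μ] μ[fun ω => (Z ω - 1 / 2) * (h (Z ω, X ω) - p (X ω)) |
      MeasurableSpace.comap X inferInstance] := by
  have hm₂ : MeasurableSpace.comap (fun ω => (Z ω, X ω)) inferInstance ≤ mΩ :=
    (hZ.prodMk hX).comap_le
  have hZX : Measurable[MeasurableSpace.comap (fun ω => (Z ω, X ω)) inferInstance]
      fun ω => (Z ω, X ω) := comap_measurable _
  have hW : StronglyMeasurable[MeasurableSpace.comap (fun ω => (Z ω, X ω)) inferInstance]
      fun ω => Z ω - 1 / 2 := ((measurable_fst.comp hZX).sub measurable_const).stronglyMeasurable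
  have hp₂ : StronglyMeasurable[MeasurableSpace.comap (fun ω => (Z ω, X ω)) inferInstance]
      fun ω => p (X ω) := (hp_meas.comp (measurable_snd.comp hZX)).stronglyMeasurable
  have hWTp : Integrable ((fun ω => Z ω - 1 / 2) * (T - fun ω => p (X ω))) μ :=
    (hT.sub hp_int).bdd_mul (hW.mono hm₂).aestronglyMeasurable
      (ae_of_all _ fun ω => abs_sub_half_le_of_binary (hZ01 ω))
  calc (fun ω => β (X ω))
      =ᵐ[μ] μ[fun ω => (T ω - p (X ω)) * (Z ω - r (X ω)) |
          MeasurableSpace.comap X inferInstance] := hβ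
    _ =ᵐ[μ] μ[(fun ω => Z ω - 1 / 2) * (T - fun ω => p (X ω)) |
          MeasurableSpace.comap X inferInstance] := by
      refine condExp_congr_ae ?_
      filter_upwards [hr] with ω hω
      rw [Pi.mul_apply, hω, mul_comm]
      rfl
    _ =ᵐ[μ] μ[(fun ω => Z ω - 1 / 2) * μ[T - fun ω => p (X ω) |
          MeasurableSpace.comap (fun ω => (Z ω, X ω)) inferInstance] |
          MeasurableSpace.comap X inferInstance] :=
      condExp_mul_ae_eq_condExp_mul_condExp (comap_le_comap_prodMk Z X) hm₂ hW hWTp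
        (hT.sub hp_int)
    _ =ᵐ[μ] μ[fun ω => (Z ω - 1 / 2) * (h (Z ω, X ω) - p (X ω)) |
          MeasurableSpace.comap X inferInstance] :=
      condExp_congr_ae (EventuallyEq.rfl.mul
        ((condExp_sub_ae_eq_of_stronglyMeasurable hm₂ hT hp₂ hp_int).trans
          (hhT.symm.sub EventuallyEq.rfl)))

lemma ae_eq_sub_half_mul_sub {β r : 𝓧 → ℝ} (hT : Integrable T μ)
    (hZ : Measurable Z) (hX : Measurable X) (hZ01 : ∀ ω, Z ω = 0 ∨ Z ω = 1)
    (hp_meas : Measurable p) (hp_int : Integrable (fun ω => p (X ω)) μ)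
    (hp : (fun ω => p (X ω)) =ᵐ[μ] fun ω => (h (0, X ω) + h (1, X ω)) / 2)
    (hh : Measurable h) {C : ℝ} (hC : ∀ zx, |h zx| ≤ C)
    (hhT : (fun ω => h (Z ω, X ω)) =ᵐ[μ]
        μ[T | MeasurableSpace.comap (fun ω => (Z ω, X ω)) inferInstance])
    (hr : (fun ω => r (X ω)) =ᵐ[μ] fun _ => (1 / 2 : ℝ))
    (hβ : (fun ω => β (X ω)) =ᵐ[μ]
        μ[fun ω => (T ω - p (X ω)) * (Z ω - r (X ω)) | MeasurableSpace.comap X inferInstance]) :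
    (fun ω => β (X ω)) =ᵐ[μ] fun ω => (Z ω - 1 / 2) * (h (Z ω, X ω) - p (X ω)) := by
  have hΔC (x : 𝓧) : |(h (1, x) - h (0, x)) / 4| ≤ C := by
    have h₁ := abs_le.mp (hC (1, x))
    have h₀ := abs_le.mp (hC (0, x))
    rw [abs_le]
    constructor <;> linarith
  calc (fun ω => β (X ω))
      =ᵐ[μ] μ[fun ω => (Z ω - 1 / 2) * (h (Z ω, X ω) - p (X ω)) |
          MeasurableSpace.comap X inferInstance] :=
      ae_eq_condExp_sub_half_mul_sub hT hZ hX hZ01 hp_meas hp_int hhT hr hβ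
    _ =ᵐ[μ] μ[fun ω => (h (1, X ω) - h (0, X ω)) / 4 | MeasurableSpace.comap X inferInstance] :=
      condExp_congr_ae (sub_half_mul_sub_ae_eq_quarter_sub hZ01 hp)
    _ = fun ω => (h (1, X ω) - h (0, X ω)) / 4 := condExp_comp_of_abs_le hX (by fun_prop) hΔC
    _ =ᵐ[μ] fun ω => (Z ω - 1 / 2) * (h (Z ω, X ω) - p (X ω)) :=
      (sub_half_mul_sub_ae_eq_quarter_sub hZ01 hp).symm

end BinaryInstrument

theorem stmt_16_general
    {Ω 𝓧 : Type*} [MeasurableSpace Ω] [MeasurableSpace 𝓧]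
    (μ : Measure Ω) [IsProbabilityMeasure μ]
    (Y T Z : Ω → ℝ) (X : Ω → 𝓧)
    (hT : Measurable T) (hZ : Measurable Z) (hX : Measurable X)
    (hTbdd : ∃ C, ∀ ω, |T ω| ≤ C)
    (q0 p0 r0 : 𝓧 → ℝ) (hp0m : Measurable p0)
    (hp0 : (fun ω => p0 (X ω)) =ᵐ[μ] μ[T | MeasurableSpace.comap X inferInstance])
    (hr0 : (fun ω => r0 (X ω)) =ᵐ[μ] μ[Z | MeasurableSpace.comap X inferInstance])
    (h0 : ℝ × 𝓧 → ℝ) (hh0m : Measurable h0) (hh0bdd : ∃ C, ∀ zx, |h0 zx| ≤ C)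
    (hh0 : (fun ω => h0 (Z ω, X ω)) =ᵐ[μ]
        μ[T | MeasurableSpace.comap (fun ω => (Z ω, X ω)) inferInstance])
    (β0 : 𝓧 → ℝ)
    (hβ0 : (fun ω => β0 (X ω)) =ᵐ[μ]
        μ[fun ω => (T ω - p0 (X ω)) * (Z ω - r0 (X ω)) | MeasurableSpace.comap X inferInstance])
    (hZ01 : ∀ ω, Z ω = 0 ∨ Z ω = 1)
    (hZhalf : μ[Z | MeasurableSpace.comap X inferInstance] =ᵐ[μ] fun _ => (1 / 2 : ℝ)) :
    ∀ θ : 𝓧 → ℝ, Measurable θ → (∃ C, ∀ x, |θ x| ≤ C) →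
      (∫ ω, ((Y ω - q0 (X ω)) * (Z ω - 1 / 2) - θ (X ω) * β0 (X ω)) ^ 2 ∂μ)
        = (1 / 4) * ∫ ω, (Y ω - q0 (X ω) - θ (X ω) * (h0 (Z ω, X ω) - p0 (X ω))) ^ 2 ∂μ := by
  intro θ _ _
  obtain ⟨C, hC⟩ := hh0bdd
  obtain ⟨C_T, hC_T⟩ := hTbdd
  have hT_int : Integrable T μ := .of_bound hT.aestronglyMeasurable C_T (ae_of_all _ hC_T)
  have hp_mid := ae_eq_midpoint_of_condExp_half hZ hX hZ01 hZhalf hh0m hC hp0 hh0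
  have hβ := ae_eq_sub_half_mul_sub hT_int hZ hX hZ01 hp0m (integrable_condExp.congr hp0.symm)
    hp_mid hh0m hC hh0 (hr0.trans hZhalf) hβ0
  have hpt : ∀ᵐ ω ∂μ, ((Y ω - q0 (X ω)) * (Z ω - 1 / 2) - θ (X ω) * β0 (X ω)) ^ 2
      = 1 / 4 * (Y ω - q0 (X ω) - θ (X ω) * (h0 (Z ω, X ω) - p0 (X ω))) ^ 2 := by
    filter_upwards [hβ] with ω hω
    rw [hω, ← sub_half_sq_of_binary (hZ01 ω)]
    ring
  rw [integral_congr_ae hpt, integral_const_mul]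

theorem stmt_16
    {Ω 𝓧 : Type*} [MeasurableSpace Ω] [MeasurableSpace 𝓧] [StandardBorelSpace 𝓧]
    (μ : Measure Ω) [IsProbabilityMeasure μ]
    (Y T Z : Ω → ℝ) (X : Ω → 𝓧)
    (hY : Measurable Y) (hT : Measurable T) (hZ : Measurable Z) (hX : Measurable X)
    (hYbdd : ∃ C, ∀ ω, |Y ω| ≤ C) (hTbdd : ∃ C, ∀ ω, |T ω| ≤ C)
    (hZbdd : ∃ C, ∀ ω, |Z ω| ≤ C)
    (θ0 f0 : 𝓧 → ℝ) (hθ0m : Measurable θ0) (hf0m : Measurable f0)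
    (hθ0bdd : ∃ C, ∀ x, |θ0 x| ≤ C) (hf0bdd : ∃ C, ∀ x, |f0 x| ≤ C)
    (hIV : μ[fun ω => Y ω - θ0 (X ω) * T ω - f0 (X ω) |
        MeasurableSpace.comap (fun ω => (Z ω, X ω)) inferInstance] =ᵐ[μ] 0)
    (q0 p0 r0 : 𝓧 → ℝ) (hq0m : Measurable q0) (hp0m : Measurable p0) (hr0m : Measurable r0)
    (hq0bdd : ∃ C, ∀ x, |q0 x| ≤ C) (hp0bdd : ∃ C, ∀ x, |p0 x| ≤ C)
    (hr0bdd : ∃ C, ∀ x, |r0 x| ≤ C)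
    (hq0 : (fun ω => q0 (X ω)) =ᵐ[μ] μ[Y | MeasurableSpace.comap X inferInstance])
    (hp0 : (fun ω => p0 (X ω)) =ᵐ[μ] μ[T | MeasurableSpace.comap X inferInstance])
    (hr0 : (fun ω => r0 (X ω)) =ᵐ[μ] μ[Z | MeasurableSpace.comap X inferInstance])
    (h0 : ℝ × 𝓧 → ℝ) (hh0m : Measurable h0) (hh0bdd : ∃ C, ∀ zx, |h0 zx| ≤ C)
    (hh0 : (fun ω => h0 (Z ω, X ω)) =ᵐ[μ]
        μ[T | MeasurableSpace.comap (fun ω => (Z ω, X ω)) inferInstance])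
    (β0 : 𝓧 → ℝ) (hβ0m : Measurable β0) (hβ0bdd : ∃ C, ∀ x, |β0 x| ≤ C)
    (hβ0 : (fun ω => β0 (X ω)) =ᵐ[μ]
        μ[fun ω => (T ω - p0 (X ω)) * (Z ω - r0 (X ω)) | MeasurableSpace.comap X inferInstance])
    (V0 : 𝓧 → ℝ) (hV0m : Measurable V0) (hV0bdd : ∃ C, ∀ x, |V0 x| ≤ C)
    (hV0 : (fun ω => V0 (X ω)) =ᵐ[μ]
        μ[fun ω => (h0 (Z ω, X ω) - p0 (X ω)) ^ 2 | MeasurableSpace.comap X inferInstance])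
    (hZ01 : ∀ ω, Z ω = 0 ∨ Z ω = 1) (hT01 : ∀ ω, T ω = 0 ∨ T ω = 1)
    (hZhalf : μ[Z | MeasurableSpace.comap X inferInstance] =ᵐ[μ] fun _ => (1 / 2 : ℝ)) :
    ∀ θ : 𝓧 → ℝ, Measurable θ → (∃ C, ∀ x, |θ x| ≤ C) →
      (∫ ω, ((Y ω - q0 (X ω)) * (Z ω - 1 / 2) - θ (X ω) * β0 (X ω)) ^ 2 ∂μ)
        = (1 / 4) * ∫ ω, (Y ω - q0 (X ω) - θ (X ω) * (h0 (Z ω, X ω) - p0 (X ω))) ^ 2 ∂μ :=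
  stmt_16_general μ Y T Z X hT hZ hX hTbdd q0 p0 r0 hp0m hp0 hr0 h0 hh0m hh0bdd hh0 β0 hβ0 hZ01
    hZhalf
end
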